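/- arXiv:2302.03670 — 9 statements merged into one kernel-verified Lean document; each statement's English description precedes it below -/
import Mathlib

section
/- Let F be a field, let K ≥ 1 and y ≥ 0 be integers, let f_1, …, f_K be pairwise distinct elements of F, let ℓ ∈ {1,…,K}, and let w_1,…,w_K ∈ F, z_0,…,z_y ∈ F and z̃ ∈ F. Then there exists a polynomial P ∈ F[X] of degree at most K + y such that for every α ∈ F with α ≠ f_i for all i, ( Σ_{i=1}^K w_i/(f_i − α) + Σ_{t=0}^{y} z_t α^t ) · ( (∏_{i≠ℓ}(f_i − α)) / (∏_{i≠ℓ}(f_i − f_ℓ)) + (∏_{i=1}^K (f_i − α)) · z̃ ) = w_ℓ/(f_ℓ − α) + P(α). -/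
open Finset Polynomial

/-- Reading-phase identity of the PRUW scheme: the product of the noisy
Cauchy-coded storage and the ℓ-th noisy Lagrange query equals the desired
term `w ℓ / (f ℓ - α)` plus a polynomial of degree at most `K + y` in `α`. -/
theorem pruw_reading_phase_identity
    (F : Type*) [Field F] (K y : ℕ) (hK : 1 ≤ K)
    (f : Fin K → F) (hf : Function.Injective f)
    (ℓ : Fin K) (w : Fin K → F) (z : ℕ → F) (ztilde : F) :
    ∃ P : Polynomial F, P.degree ≤ (K + y : ℕ) ∧
      ∀ α : F, (∀ i : Fin K, α ≠ f i) →
        ((∑ i : Fin K, w i / (f i - α)) + ∑ t ∈ Finset.range (y + 1), z t * α ^ t) *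
          ((∏ i ∈ Finset.univ.erase ℓ, (f i - α)) /
              (∏ i ∈ Finset.univ.erase ℓ, (f i - f ℓ)) +
            (∏ i : Fin K, (f i - α)) * ztilde)
        = w ℓ / (f ℓ - α) + P.eval α := by
  classical
  set D : F := ∏ i ∈ Finset.univ.erase ℓ, (f i - f ℓ) with hD
  have hD0 : D ≠ 0 := Finset.prod_ne_zero_iff.mpr (fun i hi =>
    sub_ne_zero.mpr (fun h => (Finset.mem_erase.mp hi).1 (hf h)))
  set Np : F[X] := ∑ t ∈ Finset.range (y+1), C (z t) * X ^ t with hNp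
  set Qp : F[X] := ∏ i : Fin K, (C (f i) - X) with hQp
  set Lp : F[X] := ∏ i ∈ Finset.univ.erase ℓ, (C (f i) - X) with hLp
  have hLeval : ∀ β, Lp.eval β = ∏ i ∈ Finset.univ.erase ℓ, (f i - β) := by
    intro β; rw [hLp, eval_prod]; simp
  have hQeval : ∀ β, Qp.eval β = ∏ i : Fin K, (f i - β) := by
    intro β; rw [hQp, eval_prod]; simp
  have hNeval : ∀ β, Np.eval β = ∑ t ∈ Finset.range (y+1), z t * β ^ t := by
    intro β; rw [hNp, eval_finset_sum]; simp
  have hdvd : (C (f ℓ) - X) ∣ (Lp - C D) := by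
    rw [show (C (f ℓ) - X) = -(X - C (f ℓ)) by ring, neg_dvd, dvd_iff_isRoot,
      IsRoot.def, eval_sub, eval_C, hLeval, hD, sub_self]
  obtain ⟨g, hg⟩ := hdvd
  -- degree bounds
  have hcard : (Finset.univ.erase ℓ).card = K - 1 := by
    simp [Finset.card_erase_of_mem]
  have hprodDeg : ∀ (s : Finset (Fin K)), (∏ i ∈ s, (C (f i) - X)).natDegree ≤ s.card := by
    intro s
    refine (natDegree_prod_le s _).trans ?_
    have h1 : ∑ i ∈ s, (C (f i) - X).natDegree ≤ ∑ _i ∈ s, 1 :=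
      Finset.sum_le_sum (fun i _ => (natDegree_sub_le _ _).trans (by simp))
    simpa using h1
  have hgdeg : g.natDegree ≤ K + y := by
    by_cases hg0 : g = 0
    · simp [hg0]
    · have hne : (C (f ℓ) - X) ≠ 0 := by
        rw [show (C (f ℓ) - X) = -(X - C (f ℓ)) by ring, neg_ne_zero]
        exact X_sub_C_ne_zero (f ℓ)
      have h1 : (Lp - C D).natDegree = 1 + g.natDegree := by
        rw [hg, natDegree_mul hne hg0,
          show (C (f ℓ) - X) = -(X - C (f ℓ)) by ring, natDegree_neg,
          natDegree_X_sub_C]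
      have h2 : (Lp - C D).natDegree ≤ K - 1 := by
        refine (natDegree_sub_le _ _).trans ?_
        simp only [natDegree_C, max_le_iff]
        exact ⟨(hprodDeg _).trans_eq hcard, Nat.zero_le _⟩
      omega
  have hNdeg : Np.natDegree ≤ y := by
    refine natDegree_sum_le_of_forall_le _ _ (fun t ht => ?_)
    refine (natDegree_mul_le).trans ?_
    simp only [natDegree_C, natDegree_X_pow, zero_add]
    exact Nat.lt_succ_iff.mp (Finset.mem_range.mp ht)
  refine ⟨C (w ℓ / D) * g
      + (∑ i ∈ Finset.univ.erase ℓ,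
          C (w i / D) * ∏ j ∈ (Finset.univ.erase ℓ).erase i, (C (f j) - X))
      + (∑ i : Fin K, C (w i * ztilde) * ∏ j ∈ Finset.univ.erase i, (C (f j) - X))
      + Np * (C D⁻¹ * Lp + Qp * C ztilde), ?_, ?_⟩
  · rw [← natDegree_le_iff_degree_le]
    refine (natDegree_add_le _ _).trans (max_le ((natDegree_add_le _ _).trans
      (max_le ((natDegree_add_le _ _).trans (max_le ?_ ?_)) ?_)) ?_)
    · exact natDegree_mul_le.trans (by simpa using hgdeg)
    · refine natDegree_sum_le_of_forall_le _ _ (fun i hi => ?_)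
      refine natDegree_mul_le.trans ?_
      simp only [natDegree_C, zero_add]
      exact (hprodDeg _).trans (le_trans (Finset.card_le_univ _) (by simp))
    · refine natDegree_sum_le_of_forall_le _ _ (fun i hi => ?_)
      refine natDegree_mul_le.trans ?_
      simp only [natDegree_C, zero_add]
      exact (hprodDeg _).trans (le_trans (Finset.card_le_univ _) (by simp))
    · refine natDegree_mul_le.trans ?_
      have h2 : (C D⁻¹ * Lp + Qp * C ztilde).natDegree ≤ K := by
        refine (natDegree_add_le _ _).trans (max_le ?_ ?_)
        · refine natDegree_mul_le.trans ?_
          simp only [natDegree_C, zero_add]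
          exact (hprodDeg _).trans_eq hcard |>.trans (Nat.sub_le _ _)
        · refine natDegree_mul_le.trans ?_
          simp only [natDegree_C, add_zero]
          exact (hprodDeg _).trans (by simp)
      omega
  · intro α hα
    have hu : ∀ i, f i - α ≠ 0 := fun i => sub_ne_zero.mpr (Ne.symm (hα i))
    have hLα : (∏ j ∈ Finset.univ.erase ℓ, (f j - α)) = D + (f ℓ - α) * g.eval α := by
      have h := congrArg (eval α) hg
      simp only [eval_sub, eval_mul, eval_C, eval_X, hLeval] at h
      linear_combination h
    have hQα : ∀ i : Fin K, (∏ j : Fin K, (f j - α))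
        = (f i - α) * ∏ j ∈ Finset.univ.erase i, (f j - α) := by
      intro i
      exact (Finset.mul_prod_erase _ _ (Finset.mem_univ i)).symm
    have key1 : (∑ i : Fin K, w i / (f i - α)) * ((∏ i ∈ Finset.univ.erase ℓ, (f i - α)) / D)
        = w ℓ / (f ℓ - α) + w ℓ / D * g.eval α
          + ∑ i ∈ Finset.univ.erase ℓ, w i / D * ∏ j ∈ (Finset.univ.erase ℓ).erase i, (f j - α) := by
      rw [Finset.sum_mul, ← Finset.sum_erase_add _ _ (Finset.mem_univ ℓ)]
      have hterm : ∀ i ∈ Finset.univ.erase ℓ,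
          w i / (f i - α) * ((∏ j ∈ Finset.univ.erase ℓ, (f j - α)) / D)
            = w i / D * ∏ j ∈ (Finset.univ.erase ℓ).erase i, (f j - α) := by
        intro i hi
        rw [← Finset.mul_prod_erase _ _ hi]
        set r := ∏ j ∈ (Finset.univ.erase ℓ).erase i, (f j - α) with hr
        field_simp [hu i, hD0]
      rw [Finset.sum_congr rfl hterm]
      have hℓ : w ℓ / (f ℓ - α) * ((∏ j ∈ Finset.univ.erase ℓ, (f j - α)) / D)
          = w ℓ / (f ℓ - α) + w ℓ / D * g.eval α := by
        rw [hLα]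
        field_simp [hu ℓ, hD0]
      rw [hℓ]; ring
    have key2 : (∑ i : Fin K, w i / (f i - α)) * ((∏ i : Fin K, (f i - α)) * ztilde)
        = ∑ i : Fin K, w i * ztilde * ∏ j ∈ Finset.univ.erase i, (f j - α) := by
      rw [Finset.sum_mul]
      refine Finset.sum_congr rfl (fun i _ => ?_)
      rw [hQα i]
      set r := ∏ j ∈ Finset.univ.erase i, (f j - α) with hr
      field_simp [hu i]
    have expand : ∀ S N L Q : F,
        (S + N) * (L / D + Q * ztilde)
          = S * (L / D) + S * (Q * ztilde) + N * (L / D + Q * ztilde) := by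
      intros; ring
    rw [expand, key1, key2]
    simp only [eval_add, eval_mul, eval_C, eval_X, eval_sub, eval_prod, eval_finset_sum,
      eval_pow, hLeval, hQeval, hNeval]
    ring
end

section
/- Let F be a field, let y ≥ 0 and d ≥ 0 be integers, let f_1,…,f_y be pairwise distinct elements of F, and let α_1,…,α_{y+d+1} be pairwise distinct elements of F with α_n ≠ f_j for all n and j. Then the (y+d+1) × (y+d+1) matrix whose n-th row is ( 1/(f_1 − α_n), …, 1/(f_y − α_n), 1, α_n, α_n^2, …, α_n^{d} ) is invertible. -/
open Finset Polynomial

/-- Cauchy–Vandermonde invertibility underlying decodability in the reading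
phase of the PRUW scheme: the `(y+d+1) × (y+d+1)` matrix whose `n`-th row is
`(1/(f 1 - α n), …, 1/(f y - α n), 1, α n, …, (α n)^d)` is invertible. -/
theorem cauchy_vandermonde_invertible
    (F : Type*) [Field F] (y d : ℕ)
    (f : Fin y → F) (hf : Function.Injective f)
    (α : Fin (y + d + 1) → F) (hα : Function.Injective α)
    (hαf : ∀ (n : Fin (y + d + 1)) (j : Fin y), α n ≠ f j)
    (M : Matrix (Fin (y + d + 1)) (Fin (y + d + 1)) F)
    (hM : ∀ (n : Fin (y + d + 1)) (c : Fin (y + d + 1)),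
      M n c = if h : (c : ℕ) < y then 1 / (f ⟨c, h⟩ - α n)
              else (α n) ^ ((c : ℕ) - y)) :
    IsUnit M.det := by
  classical
  rw [isUnit_iff_ne_zero]
  intro hdet
  obtain ⟨v, hv0, hv⟩ := (Matrix.exists_mulVec_eq_zero_iff).2 hdet
  -- the full Cauchy product polynomial
  have hdeg1 : ∀ a : F, (C a - X).natDegree = 1 := fun a => by
    rw [show C a - X = -(X - C a) by ring, natDegree_neg, natDegree_X_sub_C]
  set Pr : F[X] := ∏ i, (C (f i) - X) with hPr
  have hPrne : Pr ≠ 0 := by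
    refine Finset.prod_ne_zero_iff.2 fun i _ h => ?_
    simpa [h] using hdeg1 (f i)
  let g : Fin (y + d + 1) → F[X] := fun c =>
    if h : (c : ℕ) < y then ∏ i ∈ univ.erase ⟨c, h⟩, (C (f i) - X)
    else X ^ ((c : ℕ) - y) * Pr
  set Q : F[X] := ∑ c, C (v c) * g c with hQ
  have hdegPr : Pr.natDegree ≤ y := by
    refine le_trans (natDegree_prod_le _ _) ?_
    simp [hdeg1]
  -- degree bound on Q
  have hdegQ : Q.natDegree ≤ y + d := by
    refine natDegree_sum_le_of_forall_le _ _ fun c _ => ?_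
    refine le_trans (natDegree_mul_le) ?_
    simp only [natDegree_C, zero_add]
    by_cases h : (c : ℕ) < y
    · simp only [g, dif_pos h]
      refine le_trans (natDegree_prod_le _ _) ?_
      calc ∑ i ∈ univ.erase (⟨(c : ℕ), h⟩ : Fin y), (C (f i) - X).natDegree
          = (univ.erase (⟨(c : ℕ), h⟩ : Fin y)).card := by simp [hdeg1]
        _ ≤ y := by
            refine le_trans (Finset.card_erase_le) ?_
            simp
        _ ≤ y + d := Nat.le_add_right _ _
    · simp only [g, dif_neg h]
      refine le_trans (natDegree_mul_le) ?_
      have hc : (c : ℕ) - y ≤ d := by omega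
      calc (X ^ ((c : ℕ) - y) : F[X]).natDegree + Pr.natDegree
          ≤ ((c : ℕ) - y) + y := by
            refine Nat.add_le_add ?_ hdegPr
            simp [natDegree_X_pow]
        _ ≤ y + d := by omega
  -- Q vanishes at each α n
  have hQα : ∀ n, Q.eval (α n) = 0 := by
    intro n
    have hπ : ∀ i : Fin y, f i - α n ≠ 0 := fun i h => hαf n i (by
      have : α n = f i := by linear_combination -h
      exact this)
    have key : ∀ c, (g c).eval (α n) = M n c * (∏ i, (f i - α n)) := by
      intro c
      by_cases h : (c : ℕ) < y
      · simp only [g, dif_pos h, hM n c, eval_prod, eval_sub, eval_C, eval_X]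
        rw [← Finset.mul_prod_erase univ (fun i => f i - α n) (Finset.mem_univ ⟨(c : ℕ), h⟩)]
        field_simp [hπ]
      · simp only [g, dif_neg h, hM n c, eval_mul, eval_pow, eval_X]
        rw [hPr]
        simp [eval_prod]
    have hvn : ∑ c, M n c * v c = 0 := by
      simpa [Matrix.mulVec, dotProduct] using congrFun hv n
    calc Q.eval (α n) = ∑ c, v c * ((g c).eval (α n)) := by
          simp [hQ, eval_finset_sum]
      _ = (∑ c, M n c * v c) * ∏ i, (f i - α n) := by
          rw [Finset.sum_mul]
          refine Finset.sum_congr rfl fun c _ => ?_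
          rw [key c]; ring
      _ = 0 := by rw [hvn, zero_mul]
  -- hence Q = 0
  have hQ0 : Q = 0 := by
    refine Polynomial.eq_zero_of_natDegree_lt_card_of_eval_eq_zero Q hα hQα ?_
    simpa using Nat.lt_succ_of_le hdegQ
  -- the "Cauchy" coefficients vanish
  have hvlow : ∀ (j : Fin y), v (Fin.castAdd (d + 1) j) = 0 := by
    intro j
    have hj : ((Fin.castAdd (d + 1) j : Fin (y + d + 1)) : ℕ) < y := j.isLt
    have key : ∀ c, eval (f j) (C (v c) * g c) =
        if c = Fin.castAdd (d + 1) j then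
          v (Fin.castAdd (d + 1) j) * ∏ i ∈ univ.erase j, (f i - f j) else 0 := by
      intro c
      by_cases hc : c = Fin.castAdd (d + 1) j
      · subst hc
        rw [if_pos rfl]
        simp only [eval_mul, eval_C, g, dif_pos hj]
        congr 1
        have : (⟨((Fin.castAdd (d + 1) j : Fin (y + d + 1)) : ℕ), hj⟩ : Fin y) = j := by
          ext; rfl
        rw [this]
        simp [eval_prod]
      · rw [if_neg hc]
        by_cases h : (c : ℕ) < y
        · have hne : (⟨(c : ℕ), h⟩ : Fin y) ≠ j := by
            intro he
            apply hc
            ext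
            simpa using congrArg Fin.val he
          simp only [eval_mul, eval_C, g, dif_pos h, eval_prod, eval_sub, eval_X]
          rw [Finset.prod_eq_zero (Finset.mem_erase.2 ⟨hne.symm, Finset.mem_univ j⟩)
            (by simp), mul_zero]
        · simp only [eval_mul, eval_C, g, dif_neg h, eval_pow, eval_X, hPr, eval_prod, eval_sub]
          rw [Finset.prod_eq_zero (Finset.mem_univ j) (by simp), mul_zero, mul_zero]
    have heval : Q.eval (f j) = v (Fin.castAdd (d + 1) j) * ∏ i ∈ univ.erase j, (f i - f j) := by
      rw [hQ, eval_finset_sum]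
      rw [Finset.sum_congr rfl fun c _ => key c]
      simp
    have hne : (∏ i ∈ univ.erase j, (f i - f j)) ≠ 0 := by
      refine Finset.prod_ne_zero_iff.2 fun i hi h => ?_
      have : f i = f j := by linear_combination h
      exact (Finset.mem_erase.1 hi).1 (hf this)
    have : v (Fin.castAdd (d + 1) j) * ∏ i ∈ univ.erase j, (f i - f j) = 0 := by
      rw [← heval, hQ0, eval_zero]
    exact (mul_eq_zero.1 this).resolve_right hne
  -- the polynomial part
  set P : F[X] := ∑ k : Fin (d + 1), C (v (Fin.natAdd y k)) * X ^ (k : ℕ) with hP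
  have hsplit : Q = (∑ j : Fin y, C (v (Fin.castAdd (d + 1) j)) * g (Fin.castAdd (d + 1) j))
      + P * Pr := by
    rw [hQ]
    refine (Fin.sum_univ_add (f := fun c : Fin (y + (d + 1)) => C (v c) * g c)).trans ?_
    congr 1
    rw [hP, Finset.sum_mul]
    refine Finset.sum_congr rfl fun k _ => ?_
    have h1 : ¬ ((Fin.natAdd y k : Fin (y + d + 1)) : ℕ) < y := by
      simp [Fin.natAdd]
    simp only [g, dif_neg h1]
    have h2 : ((Fin.natAdd y k : Fin (y + d + 1)) : ℕ) - y = (k : ℕ) := by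
      simp [Fin.natAdd]
    rw [h2]; ring
  have hPPr : P * Pr = 0 := by
    have : Q = P * Pr := by
      rw [hsplit]
      have : ∀ j : Fin y, C (v (Fin.castAdd (d + 1) j)) * g (Fin.castAdd (d + 1) j) = 0 := by
        intro j; rw [hvlow j]; simp
      simp [this]
    rw [← this, hQ0]
  have hP0 : P = 0 := by
    rcases mul_eq_zero.1 hPPr with h | h
    · exact h
    · exact absurd h hPrne
  have hvhigh : ∀ k : Fin (d + 1), v (Fin.natAdd y k) = 0 := by
    intro k
    have := congrArg (fun p : F[X] => p.coeff (k : ℕ)) hP0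
    simp only [hP, finset_sum_coeff, coeff_C_mul, coeff_X_pow, coeff_zero] at this
    rw [Finset.sum_eq_single k] at this
    · simpa using this
    · intro b _ hb
      rw [if_neg (fun h => hb (by ext; omega)), mul_zero]
    · simp
  apply hv0
  funext c
  by_cases h : (c : ℕ) < y
  · have : c = Fin.castAdd (d + 1) ⟨(c : ℕ), h⟩ := by ext; rfl
    rw [this]; exact hvlow _
  · have hc : (c : ℕ) - y < d + 1 := by omega
    have : c = Fin.natAdd y ⟨(c : ℕ) - y, hc⟩ := by ext; simp [Fin.natAdd]; omega
    rw [this]; exact hvhigh _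
end

section
/- Let k > 1 and p > 0 be real numbers with k ∉ ℤ, set r = kp, and assume r ∉ ℤ and r − ⌊r⌋ ≤ k − ⌊k⌋. Define α = ⌊k⌋(⌈k⌉ − k)/k, β = 1 and δ = 1 − (r − ⌊r⌋)/(k − ⌊k⌋). Then 0 < α < 1, 0 ≤ δ ≤ 1, and αβ·⌊r⌋/⌊k⌋ + α(1−β)·⌈r⌉/⌊k⌋ + (1−α)δ·⌊r⌋/⌈k⌉ + (1−α)(1−δ)·⌈r⌉/⌈k⌉ = p. -/
lemma pruw_aux (A B k r : ℝ) (hA : A ≠ 0) (hA1 : A + 1 ≠ 0) (hk : k ≠ 0)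
    (hd : k - A ≠ 0) :
    A * ((A + 1) - k) / k * 1 * (B / A) +
      A * ((A + 1) - k) / k * (1 - 1) * ((B + 1) / A) +
      (1 - A * ((A + 1) - k) / k) * (1 - (r - B) / (k - A)) * (B / (A + 1)) +
      (1 - A * ((A + 1) - k) / k) * (1 - (1 - (r - B) / (k - A))) *
        ((B + 1) / (A + 1)) = r / k := by
  field_simp
  ring


/-- Theorem 1 storage-balance check, case `⌊r⌋−⌊k⌋` odd and
`r−⌊r⌋ ≤ k−⌊k⌋`: the fractions `αβ, α(1−β), (1−α)δ, (1−α)(1−δ)` stored with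
the `(⌊k⌋,⌊r⌋), (⌊k⌋,⌈r⌉), (⌈k⌉,⌊r⌋), (⌈k⌉,⌈r⌉)` MDS codes use exactly the
total normalized storage `p`. -/
theorem pruw_thm1_balance_odd_small_frac (k p : ℝ) (hk : 1 < k) (hp : 0 < p)
    (hknotint : ∀ z : ℤ, k ≠ (z : ℝ)) (r : ℝ) (hr : r = k * p)
    (hrnotint : ∀ z : ℤ, r ≠ (z : ℝ)) (hcase : r - (⌊r⌋ : ℝ) ≤ k - (⌊k⌋ : ℝ))
    (α β δ : ℝ)
    (hα : α = (⌊k⌋ : ℝ) * ((⌈k⌉ : ℝ) - k) / k) (hβ : β = 1)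
    (hδ : δ = 1 - (r - (⌊r⌋ : ℝ)) / (k - (⌊k⌋ : ℝ))) :
    0 < α ∧ α < 1 ∧ 0 ≤ δ ∧ δ ≤ 1 ∧
    α * β * ((⌊r⌋ : ℝ) / (⌊k⌋ : ℝ)) + α * (1 - β) * ((⌈r⌉ : ℝ) / (⌊k⌋ : ℝ)) +
      (1 - α) * δ * ((⌊r⌋ : ℝ) / (⌈k⌉ : ℝ)) +
      (1 - α) * (1 - δ) * ((⌈r⌉ : ℝ) / (⌈k⌉ : ℝ)) = p := by
  have hk0 : (0 : ℝ) < k := lt_trans one_pos hk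
  have hkfl : ((⌊k⌋ : ℝ)) < k :=
    lt_of_le_of_ne (Int.floor_le k) (fun h => hknotint ⌊k⌋ h.symm)
  have hkfl1 : (1 : ℝ) ≤ (⌊k⌋ : ℝ) := by
    exact_mod_cast Int.le_floor.mpr (by exact_mod_cast hk.le)
  have hkc : (⌈k⌉ : ℤ) = ⌊k⌋ + 1 := by
    have h1 : ⌊k⌋ < ⌈k⌉ := Int.lt_ceil.mpr hkfl
    have h2 : ⌈k⌉ ≤ ⌊k⌋ + 1 := Int.ceil_le.mpr (by
      push_cast; exact (Int.lt_floor_add_one k).le)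
    omega
  have hkcR : ((⌈k⌉ : ℝ)) = (⌊k⌋ : ℝ) + 1 := by exact_mod_cast congrArg (Int.cast : ℤ → ℝ) hkc
  have hrfl : ((⌊r⌋ : ℝ)) < r :=
    lt_of_le_of_ne (Int.floor_le r) (fun h => hrnotint ⌊r⌋ h.symm)
  have hrc : (⌈r⌉ : ℤ) = ⌊r⌋ + 1 := by
    have h1 : ⌊r⌋ < ⌈r⌉ := Int.lt_ceil.mpr hrfl
    have h2 : ⌈r⌉ ≤ ⌊r⌋ + 1 := Int.ceil_le.mpr (by
      push_cast; exact (Int.lt_floor_add_one r).le)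
    omega
  have hrcR : ((⌈r⌉ : ℝ)) = (⌊r⌋ : ℝ) + 1 := by exact_mod_cast congrArg (Int.cast : ℤ → ℝ) hrc
  have hkfl0 : (0 : ℝ) < (⌊k⌋ : ℝ) := lt_of_lt_of_le one_pos hkfl1
  have hdk : (0 : ℝ) < k - (⌊k⌋ : ℝ) := by linarith
  have hα0 : 0 < α := by
    rw [hα, hkcR]
    apply div_pos _ hk0
    apply mul_pos hkfl0
    linarith [Int.lt_floor_add_one k]
  have hα1 : α < 1 := by
    rw [hα, hkcR, div_lt_one hk0]
    nlinarith
  have hδ1 : δ ≤ 1 := by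
    rw [hδ]
    have : 0 ≤ (r - (⌊r⌋ : ℝ)) / (k - (⌊k⌋ : ℝ)) := div_nonneg (by linarith) hdk.le
    linarith
  have hδ0 : 0 ≤ δ := by
    rw [hδ]
    have : (r - (⌊r⌋ : ℝ)) / (k - (⌊k⌋ : ℝ)) ≤ 1 := (div_le_one hdk).mpr hcase
    linarith
  refine ⟨hα0, hα1, hδ0, hδ1, ?_⟩
  have hkc0 : ((⌈k⌉ : ℝ)) ≠ 0 := by rw [hkcR]; linarith
  have hp' : p = r / k := by rw [hr]; field_simp
  rw [hα, hβ, hδ, hkcR, hrcR, hp']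
  exact pruw_aux (⌊k⌋ : ℝ) (⌊r⌋ : ℝ) k r (ne_of_gt hkfl0)
    (by linarith) (ne_of_gt hk0) (ne_of_gt hdk)
end

section
/- Let k > 1 and p > 0 be real numbers with k ∉ ℤ, set r = kp, and assume r ∉ ℤ and r − ⌊r⌋ > k − ⌊k⌋. Define α = ⌊k⌋(⌈k⌉ − k)/k, β = (⌈r⌉ − r)/(⌈k⌉ − k) and δ = 0. Then 0 < α < 1, 0 ≤ β < 1, and αβ·⌊r⌋/⌊k⌋ + α(1−β)·⌈r⌉/⌊k⌋ + (1−α)δ·⌊r⌋/⌈k⌉ + (1−α)(1−δ)·⌈r⌉/⌈k⌉ = p. -/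
/-- Theorem 1 storage-balance check, case `⌊r⌋−⌊k⌋` odd,
`r−⌊r⌋ > k−⌊k⌋` (and `⌊k⌋p > ⌊r⌋`): with `α = ⌊k⌋(⌈k⌉−k)/k`,
`β = (⌈r⌉−r)/(⌈k⌉−k)` and `δ = 0`, the four MDS-coded fractions use exactly
the total normalized storage `p`. -/
theorem pruw_thm1_balance_odd_large_frac (k p : ℝ) (hk : 1 < k) (hp : 0 < p)
    (hknotint : ∀ z : ℤ, k ≠ (z : ℝ)) (r : ℝ) (hr : r = k * p)
    (hrnotint : ∀ z : ℤ, r ≠ (z : ℝ)) (hcase : k - (⌊k⌋ : ℝ) < r - (⌊r⌋ : ℝ))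
    (α β δ : ℝ)
    (hα : α = (⌊k⌋ : ℝ) * ((⌈k⌉ : ℝ) - k) / k)
    (hβ : β = ((⌈r⌉ : ℝ) - r) / ((⌈k⌉ : ℝ) - k)) (hδ : δ = 0) :
    0 < α ∧ α < 1 ∧ 0 ≤ β ∧ β < 1 ∧
    α * β * ((⌊r⌋ : ℝ) / (⌊k⌋ : ℝ)) + α * (1 - β) * ((⌈r⌉ : ℝ) / (⌊k⌋ : ℝ)) +
      (1 - α) * δ * ((⌊r⌋ : ℝ) / (⌈k⌉ : ℝ)) +
      (1 - α) * (1 - δ) * ((⌈r⌉ : ℝ) / (⌈k⌉ : ℝ)) = p := by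
  have hk0 : (0:ℝ) < k := lt_trans one_pos hk
  have hfk : (⌊k⌋ : ℝ) < k := lt_of_le_of_ne (Int.floor_le k) fun h => hknotint ⌊k⌋ h.symm
  have hck : k < (⌈k⌉ : ℝ) := lt_of_le_of_ne (Int.le_ceil k) (hknotint ⌈k⌉)
  have hfr : (⌊r⌋ : ℝ) < r := lt_of_le_of_ne (Int.floor_le r) fun h => hrnotint ⌊r⌋ h.symm
  have hcr : r < (⌈r⌉ : ℝ) := lt_of_le_of_ne (Int.le_ceil r) (hrnotint ⌈r⌉)
  have hkc : (⌈k⌉ : ℝ) = (⌊k⌋ : ℝ) + 1 := by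
    have h1 : ⌈k⌉ ≤ ⌊k⌋ + 1 := Int.ceil_le_floor_add_one k
    have h2 : ⌊k⌋ < ⌈k⌉ := by exact_mod_cast hfk.trans hck
    have : ⌈k⌉ = ⌊k⌋ + 1 := le_antisymm h1 h2
    exact_mod_cast this
  have hrc : (⌈r⌉ : ℝ) = (⌊r⌋ : ℝ) + 1 := by
    have h1 : ⌈r⌉ ≤ ⌊r⌋ + 1 := Int.ceil_le_floor_add_one r
    have h2 : ⌊r⌋ < ⌈r⌉ := by exact_mod_cast hfr.trans hcr
    have : ⌈r⌉ = ⌊r⌋ + 1 := le_antisymm h1 h2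
    exact_mod_cast this
  have hfk1 : (1:ℝ) ≤ (⌊k⌋:ℝ) := by exact_mod_cast Int.le_floor.mpr (by exact_mod_cast hk.le)
  have hfk0 : (⌊k⌋:ℝ) ≠ 0 := by linarith
  have hckk : (⌈k⌉:ℝ) - k ≠ 0 := by linarith
  refine ⟨?_, ?_, ?_, ?_, ?_⟩
  · rw [hα]; exact div_pos (by nlinarith) hk0
  · rw [hα, div_lt_one hk0]; nlinarith [hkc]
  · rw [hβ]; exact div_nonneg (by linarith) (by linarith)
  · rw [hβ, div_lt_one (by linarith)]; linarith [hkc, hrc]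
  · subst hr hα hβ hδ
    have hk' : k ≠ 0 := ne_of_gt hk0
    rw [hkc, hrc]
    have e1 : (⌊k⌋:ℝ) + 1 - k ≠ 0 := by linarith
    field_simp
    ring
end

section
/- Let k > 1 and p > 0 be real numbers with k ∉ ℤ, set r = kp, and assume r ∉ ℤ and r − ⌊r⌋ < ⌈k⌉ − k. Define α = ⌊k⌋(⌈k⌉ − k)/k, β = 1 − (r − ⌊r⌋)/(⌈k⌉ − k) and δ = 1. Then 0 < α < 1, 0 < β ≤ 1, and αβ·⌊r⌋/⌊k⌋ + α(1−β)·⌈r⌉/⌊k⌋ + (1−α)δ·⌊r⌋/⌈k⌉ + (1−α)(1−δ)·⌈r⌉/⌈k⌉ = p. -/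
/-! With `K = ⌊k⌋` and `g = ⌈k⌉ - k`, the weights are `α / K = g / k` and `(1 - α) / ⌈k⌉ = (k - K) / k`,
while `α (1 - β) / K = (r - ⌊r⌋) / k`. The storage therefore adds up to
`(⌊r⌋ g + (r - ⌊r⌋) + ⌊r⌋ (k - K)) / k = r / k = p`, because `g + k - K = ⌈k⌉ - ⌊k⌋ = 1`. -/

namespace Int

variable {R : Type*} [CommRing R] [LinearOrder R] [IsStrictOrderedRing R] [FloorRing R]

lemma ceil_eq_floor_add_one_of_forall_ne {a : R} (ha : ∀ z : ℤ, a ≠ z) : ⌈a⌉ = ⌊a⌋ + 1 :=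
  (ceil_eq_floor_add_one_iff_notMem a).2 fun ⟨z, hz⟩ => ha z hz.symm

lemma fract_mul_ceil_sub_floor (a : R) : fract a * (⌈a⌉ - ⌊a⌋ : R) = fract a := by
  rcases fract_eq_zero_or_add_one_sub_ceil a with h | h
  · rw [h, zero_mul]
  · have hceil : (⌈a⌉ : R) = ⌊a⌋ + 1 := by
      rw [fract] at h
      linear_combination h
    rw [hceil, add_sub_cancel_left, mul_one]

end Int

lemma one_sub_div_mem_Ioc {f g : ℝ} (hf : 0 ≤ f) (hfg : f < g) : 1 - f / g ∈ Set.Ioc 0 1 := by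
  have hg : 0 < g := hf.trans_lt hfg
  constructor
  · linarith [(div_lt_one hg).2 hfg]
  · linarith [div_nonneg hf hg.le]

lemma floor_mul_ceil_sub_div_pos {k : ℝ} (hk : 1 ≤ k) (hkz : ∀ z : ℤ, k ≠ z) :
    0 < (⌊k⌋ : ℝ) * (⌈k⌉ - k) / k := by
  have hK : (0 : ℝ) < ⌊k⌋ := Int.cast_pos.2 (Int.floor_pos.2 hk)
  have hgap : 0 < (⌈k⌉ : ℝ) - k := sub_pos.2 ((Int.le_ceil k).lt_of_ne (hkz ⌈k⌉))
  have hk0 : 0 < k := zero_lt_one.trans_le hk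
  positivity

lemma floor_mul_ceil_sub_div_lt_one {k : ℝ} (hk : 0 < k) (hkz : ∀ z : ℤ, k ≠ z) :
    (⌊k⌋ : ℝ) * (⌈k⌉ - k) / k < 1 := by
  have hK : (0 : ℝ) ≤ ⌊k⌋ := Int.cast_nonneg (Int.floor_nonneg.2 hk.le)
  have hfloor : (⌊k⌋ : ℝ) < k := (Int.floor_le k).lt_of_ne fun h => hkz ⌊k⌋ h.symm
  have hceil : (⌈k⌉ : ℝ) = ⌊k⌋ + 1 := by exact_mod_cast Int.ceil_eq_floor_add_one_of_forall_ne hkz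
  rw [div_lt_one hk, hceil]
  -- `k - K (K + 1 - k) = (K + 1) (k - K)`
  nlinarith [mul_pos (add_pos_of_nonneg_of_pos hK one_pos) (sub_pos.2 hfloor)]

-- `K`, `b`, `c` stand for `⌊k⌋`, `⌊r⌋`, `⌈r⌉`, and `⌈k⌉ = K + 1`.
lemma storage_balance_eq_div {K k b c r : ℝ} (hK : K ≠ 0) (hK1 : K + 1 ≠ 0) (hk : k ≠ 0)
    (hgap : K + 1 - k ≠ 0) (hfrac : (r - b) * (c - b) = r - b) :
    K * (K + 1 - k) / k * (1 - (r - b) / (K + 1 - k)) * (b / K) +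
      K * (K + 1 - k) / k * (1 - (1 - (r - b) / (K + 1 - k))) * (c / K) +
      (1 - K * (K + 1 - k) / k) * 1 * (b / (K + 1)) +
      (1 - K * (K + 1 - k) / k) * (1 - 1) * (c / (K + 1)) = r / k := by
  field_simp
  linear_combination (K + 1) * hfrac

theorem pruw_thm1_balance_even_small_frac_general (k p : ℝ) (hk : 1 < k)
    (hknotint : ∀ z : ℤ, k ≠ (z : ℝ)) (r : ℝ) (hr : r = k * p)
    (hcase : r - (⌊r⌋ : ℝ) < (⌈k⌉ : ℝ) - k)
    (α β δ : ℝ)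
    (hα : α = (⌊k⌋ : ℝ) * ((⌈k⌉ : ℝ) - k) / k)
    (hβ : β = 1 - (r - (⌊r⌋ : ℝ)) / ((⌈k⌉ : ℝ) - k)) (hδ : δ = 1) :
    0 < α ∧ α < 1 ∧ 0 < β ∧ β ≤ 1 ∧
    α * β * ((⌊r⌋ : ℝ) / (⌊k⌋ : ℝ)) + α * (1 - β) * ((⌈r⌉ : ℝ) / (⌊k⌋ : ℝ)) +
      (1 - α) * δ * ((⌊r⌋ : ℝ) / (⌈k⌉ : ℝ)) +
      (1 - α) * (1 - δ) * ((⌈r⌉ : ℝ) / (⌈k⌉ : ℝ)) = p := by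
  have hk0 : 0 < k := zero_lt_one.trans hk
  obtain ⟨hβ0, hβ1⟩ := one_sub_div_mem_Ioc (Int.fract_nonneg r) hcase
  refine ⟨hα ▸ floor_mul_ceil_sub_div_pos hk.le hknotint,
    hα ▸ floor_mul_ceil_sub_div_lt_one hk0 hknotint, hβ ▸ hβ0, hβ ▸ hβ1, ?_⟩
  have hK : (0 : ℝ) < ⌊k⌋ := Int.cast_pos.2 (Int.floor_pos.2 hk.le)
  have hceil : (⌈k⌉ : ℝ) = ⌊k⌋ + 1 := by
    exact_mod_cast Int.ceil_eq_floor_add_one_of_forall_ne hknotint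
  have hgap : (⌈k⌉ : ℝ) - k ≠ 0 := by linarith [Int.floor_le r]
  subst hα hβ hδ
  rw [hceil] at hgap ⊢
  rw [storage_balance_eq_div hK.ne' (by linarith) hk0.ne' hgap (Int.fract_mul_ceil_sub_floor r), hr,
    mul_div_cancel_left₀ p hk0.ne']

/-- Theorem 1 storage-balance check, case `⌊r⌋−⌊k⌋` even and
`r−⌊r⌋ < ⌈k⌉−k`: with `α = ⌊k⌋(⌈k⌉−k)/k`, `β = 1 − (r−⌊r⌋)/(⌈k⌉−k)` and
`δ = 1`, the four MDS-coded fractions use exactly the total normalized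
storage `p`. -/
theorem pruw_thm1_balance_even_small_frac (k p : ℝ) (hk : 1 < k) (hp : 0 < p)
    (hknotint : ∀ z : ℤ, k ≠ (z : ℝ)) (r : ℝ) (hr : r = k * p)
    (hrnotint : ∀ z : ℤ, r ≠ (z : ℝ)) (hcase : r - (⌊r⌋ : ℝ) < (⌈k⌉ : ℝ) - k)
    (α β δ : ℝ)
    (hα : α = (⌊k⌋ : ℝ) * ((⌈k⌉ : ℝ) - k) / k)
    (hβ : β = 1 - (r - (⌊r⌋ : ℝ)) / ((⌈k⌉ : ℝ) - k)) (hδ : δ = 1) :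
    0 < α ∧ α < 1 ∧ 0 < β ∧ β ≤ 1 ∧
    α * β * ((⌊r⌋ : ℝ) / (⌊k⌋ : ℝ)) + α * (1 - β) * ((⌈r⌉ : ℝ) / (⌊k⌋ : ℝ)) +
      (1 - α) * δ * ((⌊r⌋ : ℝ) / (⌈k⌉ : ℝ)) +
      (1 - α) * (1 - δ) * ((⌈r⌉ : ℝ) / (⌈k⌉ : ℝ)) = p :=
  pruw_thm1_balance_even_small_frac_general k p hk hknotint r hr hcase α β δ hα hβ hδ
end

section
/- Let N ≥ 1 be an integer and μ : {1,…,N} → ℝ with 0 < μ(n) ≤ 1 for all n. Let μ̄ = max_n μ(n), k = 1/μ̄, p = Σ_{n=1}^N μ(n) and s = ⌊k⌋p, and assume ⌊k⌋ ≥ 1 and s ∉ ℤ. Define, for each n, m̃(n) = max(μ(n) − (s−⌊s⌋)/⌊k⌋, 0) and h̃(n) = max(μ(n) − (⌈s⌉−s)/⌊k⌋, 0); assume p − Σ_n m̃(n) − Σ_n h̃(n) > 0 and set γ̃ = ( (⌊s⌋/⌊k⌋)(⌈s⌉−s) − Σ_n m̃(n) ) / ( p − Σ_n m̃(n) − Σ_n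 h̃(n) ). Define μ̂₁(n) = m̃(n) + (μ(n) − m̃(n) − h̃(n))γ̃ and μ̂₂(n) = h̃(n) + (μ(n) − m̃(n) − h̃(n))(1 − γ̃). Then for every n: μ̂₁(n) + μ̂₂(n) = μ(n), 0 ≤ μ̂₁(n) ≤ (⌈s⌉−s)/⌊k⌋ and 0 ≤ μ̂₂(n) ≤ (s−⌊s⌋)/⌊k⌋; moreover Σ_n μ̂₁(n) = (⌈s⌉−s)⌊s⌋/⌊k⌋ and Σ_n μ̂₂(n) = (s−⌊s⌋)⌈s⌉/⌊k⌋. -/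
open Finset

/-- Auxiliary counting bound: if each `μ n - c` is at most `e` and the total
mass satisfies `p - (q+1)c ≤ q e`, then `∑ max (μ n - c) 0 ≤ q e`. -/
lemma pruw_sum_max_le_aux {N : ℕ} (μ : Fin N → ℝ) (hμ0 : ∀ n, 0 ≤ μ n)
    (c e : ℝ) (hc : 0 ≤ c) (he : 0 ≤ e) (hub : ∀ n, μ n - c ≤ e)
    (q : ℤ) (hq : 0 ≤ q)
    (hp : (∑ n, μ n) - ((q : ℝ) + 1) * c ≤ (q : ℝ) * e) :
    ∑ n, max (μ n - c) 0 ≤ (q : ℝ) * e := by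
  classical
  set F := Finset.univ.filter (fun n => 0 < μ n - c) with hF
  have hsum : ∑ n, max (μ n - c) 0 = ∑ n ∈ F, (μ n - c) := by
    rw [hF, Finset.sum_filter]
    refine Finset.sum_congr rfl fun n _ => ?_
    by_cases h : 0 < μ n - c
    · simp [h, max_eq_left h.le]
    · simp [h, max_eq_right (le_of_not_gt h)]
  rw [hsum]
  rcases le_or_gt (F.card : ℤ) q with hcard | hcard
  · have h1 : ∑ n ∈ F, (μ n - c) ≤ (F.card : ℝ) * e := by
      have := Finset.sum_le_card_nsmul F (fun n => μ n - c) e (fun n _ => hub n)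
      simpa [nsmul_eq_mul] using this
    refine h1.trans ?_
    have : (F.card : ℝ) ≤ (q : ℝ) := by exact_mod_cast hcard
    exact mul_le_mul_of_nonneg_right this he
  · have hcard' : (q : ℝ) + 1 ≤ (F.card : ℝ) := by exact_mod_cast hcard
    have h1 : ∑ n ∈ F, (μ n - c) = (∑ n ∈ F, μ n) - (F.card : ℝ) * c := by
      rw [Finset.sum_sub_distrib, Finset.sum_const, nsmul_eq_mul]
    have h2 : ∑ n ∈ F, μ n ≤ ∑ n, μ n :=
      Finset.sum_le_sum_of_subset_of_nonneg (Finset.filter_subset _ _)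
        (fun i _ _ => hμ0 i)
    have h3 : ((q : ℝ) + 1) * c ≤ (F.card : ℝ) * c :=
      mul_le_mul_of_nonneg_right hcard' hc
    linarith

/-- Lemma 1 of the paper (case `α = 1`): the storage allocations
`μ̂₁(n), μ̂₂(n)` devoted in database `n` to the `(⌊k⌋,⌊s⌋)` and `(⌊k⌋,⌈s⌉)`
MDS-coded fractions of the model add up to `μ(n)`, respect the per-database
caps `(⌈s⌉−s)/⌊k⌋` and `(s−⌊s⌋)/⌊k⌋`, and have the prescribed totals. -/
theorem pruw_lemma1_storage_allocation
    (N : ℕ) (hN : 1 ≤ N) (μ : Fin N → ℝ)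
    (hμ : ∀ n, 0 < μ n ∧ μ n ≤ 1)
    (μbar : ℝ) (hμbar : IsGreatest (Set.range μ) μbar)
    (k p s : ℝ) (hk : k = 1 / μbar) (hp : p = ∑ n, μ n)
    (hs : s = (⌊k⌋ : ℝ) * p)
    (hkfloor : 1 ≤ ⌊k⌋) (hsnotint : ∀ z : ℤ, s ≠ (z : ℝ))
    (mt ht : Fin N → ℝ)
    (hmt : ∀ n, mt n = max (μ n - (s - (⌊s⌋ : ℝ)) / (⌊k⌋ : ℝ)) 0)
    (hht : ∀ n, ht n = max (μ n - ((⌈s⌉ : ℝ) - s) / (⌊k⌋ : ℝ)) 0)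
    (hpos : 0 < p - (∑ n, mt n) - (∑ n, ht n))
    (γt : ℝ)
    (hγt : γt = (((⌊s⌋ : ℝ) / (⌊k⌋ : ℝ)) * ((⌈s⌉ : ℝ) - s) - ∑ n, mt n) /
      (p - (∑ n, mt n) - (∑ n, ht n)))
    (μhat₁ μhat₂ : Fin N → ℝ)
    (hμhat₁ : ∀ n, μhat₁ n = mt n + (μ n - mt n - ht n) * γt)
    (hμhat₂ : ∀ n, μhat₂ n = ht n + (μ n - mt n - ht n) * (1 - γt)) :
    (∀ n, μhat₁ n + μhat₂ n = μ n) ∧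
    (∀ n, 0 ≤ μhat₁ n ∧ μhat₁ n ≤ ((⌈s⌉ : ℝ) - s) / (⌊k⌋ : ℝ)) ∧
    (∀ n, 0 ≤ μhat₂ n ∧ μhat₂ n ≤ (s - (⌊s⌋ : ℝ)) / (⌊k⌋ : ℝ)) ∧
    (∑ n, μhat₁ n) = ((⌈s⌉ : ℝ) - s) * (⌊s⌋ : ℝ) / (⌊k⌋ : ℝ) ∧
    (∑ n, μhat₂ n) = (s - (⌊s⌋ : ℝ)) * (⌈s⌉ : ℝ) / (⌊k⌋ : ℝ) := by
  classical
  -- basic positivity facts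
  have hK1 : (1 : ℝ) ≤ (⌊k⌋ : ℝ) := by exact_mod_cast hkfloor
  have hK0 : (0 : ℝ) < (⌊k⌋ : ℝ) := lt_of_lt_of_le one_pos hK1
  have hKne : ((⌊k⌋ : ℝ)) ≠ 0 := ne_of_gt hK0
  obtain ⟨⟨n₀, hn₀⟩, hubar⟩ := hμbar
  have hubar' : ∀ n, μ n ≤ μbar := fun n => hubar ⟨n, rfl⟩
  have hμbar0 : 0 < μbar := hn₀ ▸ (hμ n₀).1
  have hk0 : 0 < k := by rw [hk]; positivity
  have hμbark : μbar = 1 / k := by rw [hk]; field_simp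
  have hKk : ((⌊k⌋ : ℝ)) ≤ k := Int.floor_le k
  have hμub : ∀ n, μ n ≤ 1 / (⌊k⌋ : ℝ) := by
    intro n
    refine (hubar' n).trans ?_
    rw [hμbark]
    exact one_div_le_one_div_of_le hK0 hKk
  have hNne : Nonempty (Fin N) := ⟨n₀⟩
  have hp0 : 0 < p := by
    rw [hp]
    exact Finset.sum_pos (fun n _ => (hμ n).1) Finset.univ_nonempty
  have hs0 : 0 < s := by rw [hs]; positivity
  -- fractional part facts
  have hsne : s ≠ ((⌊s⌋ : ℤ) : ℝ) := hsnotint ⌊s⌋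
  have hf0 : 0 < s - (⌊s⌋ : ℝ) := by
    have h := Int.floor_le s
    rcases lt_or_eq_of_le h with h' | h'
    · linarith
    · exact absurd h'.symm hsne
  have hf1 : s - (⌊s⌋ : ℝ) < 1 := by
    have := Int.lt_floor_add_one s
    linarith
  have hceil : ((⌈s⌉ : ℤ) : ℝ) = ((⌊s⌋ : ℤ) : ℝ) + 1 := by
    have h1 : ⌈s⌉ ≤ ⌊s⌋ + 1 := by
      apply Int.ceil_le.mpr
      push_cast
      linarith
    have h2 : ⌊s⌋ + 1 ≤ ⌈s⌉ := by
      have h3 : ((⌊s⌋ : ℤ) : ℝ) < ((⌈s⌉ : ℤ) : ℝ) :=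
        lt_of_lt_of_le (by linarith) (Int.le_ceil s)
      exact Int.add_one_le_iff.mpr (by exact_mod_cast h3)
    exact_mod_cast le_antisymm h1 h2
  have hsfloor0 : (0 : ℝ) ≤ ((⌊s⌋ : ℤ) : ℝ) := by
    exact_mod_cast Int.floor_nonneg.mpr hs0.le
  have hg0 : 0 < ((⌈s⌉ : ℤ) : ℝ) - s := by rw [hceil]; linarith
  have hpK : p = s / (⌊k⌋ : ℝ) := by rw [hs]; field_simp
  -- caps
  have ha0 : 0 ≤ (s - (⌊s⌋ : ℝ)) / (⌊k⌋ : ℝ) := by positivity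
  have hb0 : 0 ≤ ((⌈s⌉ : ℝ) - s) / (⌊k⌋ : ℝ) := by positivity
  have habq : (s - (⌊s⌋ : ℝ)) / (⌊k⌋ : ℝ) + ((⌈s⌉ : ℝ) - s) / (⌊k⌋ : ℝ)
      = 1 / (⌊k⌋ : ℝ) := by
    rw [hceil]; ring
  have hab : ∀ n, μ n ≤ (s - (⌊s⌋ : ℝ)) / (⌊k⌋ : ℝ) + ((⌈s⌉ : ℝ) - s) / (⌊k⌋ : ℝ) := by
    intro n
    have h := hμub n
    linarith [habq]
  -- the two key sum bounds
  have hA : (∑ n, mt n) ≤ (⌊s⌋ : ℝ) * (((⌈s⌉ : ℝ) - s) / (⌊k⌋ : ℝ)) := by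
    have hstep := pruw_sum_max_le_aux μ (fun n => (hμ n).1.le)
      ((s - (⌊s⌋ : ℝ)) / (⌊k⌋ : ℝ)) (((⌈s⌉ : ℝ) - s) / (⌊k⌋ : ℝ)) ha0 hb0
      (fun n => by linarith [hab n]) ⌊s⌋ (Int.floor_nonneg.mpr hs0.le) ?_
    · calc (∑ n, mt n) = ∑ n, max (μ n - (s - (⌊s⌋ : ℝ)) / (⌊k⌋ : ℝ)) 0 :=
            Finset.sum_congr rfl fun n _ => hmt n
        _ ≤ _ := hstep
    · rw [← hp]
      have heq : p - ((⌊s⌋ : ℝ) + 1) * ((s - (⌊s⌋ : ℝ)) / (⌊k⌋ : ℝ))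
          = (⌊s⌋ : ℝ) * (((⌈s⌉ : ℝ) - s) / (⌊k⌋ : ℝ)) := by
        rw [hceil, hpK]; ring
      linarith [le_of_eq heq]
  have hB : (∑ n, ht n) ≤ (⌈s⌉ : ℝ) * ((s - (⌊s⌋ : ℝ)) / (⌊k⌋ : ℝ)) := by
    have hstep := pruw_sum_max_le_aux μ (fun n => (hμ n).1.le)
      (((⌈s⌉ : ℝ) - s) / (⌊k⌋ : ℝ)) ((s - (⌊s⌋ : ℝ)) / (⌊k⌋ : ℝ)) hb0 ha0
      (fun n => by linarith [hab n]) ⌈s⌉ (Int.ceil_nonneg hs0.le) ?_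
    · calc (∑ n, ht n) = ∑ n, max (μ n - ((⌈s⌉ : ℝ) - s) / (⌊k⌋ : ℝ)) 0 :=
            Finset.sum_congr rfl fun n _ => hht n
        _ ≤ _ := hstep
    · rw [← hp]
      rw [hceil, hpK]
      have e1 : s / (⌊k⌋ : ℝ) - (((⌊s⌋ : ℝ) + 1) + 1) * ((((⌊s⌋ : ℝ) + 1) - s) / (⌊k⌋ : ℝ))
          = (s - (((⌊s⌋ : ℝ) + 1) + 1) * (((⌊s⌋ : ℝ) + 1) - s)) / (⌊k⌋ : ℝ) := by
        ring
      have e2 : ((⌊s⌋ : ℝ) + 1) * ((s - (⌊s⌋ : ℝ)) / (⌊k⌋ : ℝ))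
          = (((⌊s⌋ : ℝ) + 1) * (s - (⌊s⌋ : ℝ))) / (⌊k⌋ : ℝ) := by
        ring
      rw [e1, e2, div_le_div_iff_of_pos_right hK0]
      nlinarith [hf1, hsfloor0]
  -- γ ∈ [0, 1]
  have hXeq : ((⌊s⌋ : ℝ) / (⌊k⌋ : ℝ)) * ((⌈s⌉ : ℝ) - s)
      = (⌊s⌋ : ℝ) * (((⌈s⌉ : ℝ) - s) / (⌊k⌋ : ℝ)) := by ring
  have hABp : (⌊s⌋ : ℝ) * (((⌈s⌉ : ℝ) - s) / (⌊k⌋ : ℝ))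
      + (⌈s⌉ : ℝ) * ((s - (⌊s⌋ : ℝ)) / (⌊k⌋ : ℝ)) = p := by
    rw [hceil, hpK]; ring
  have hγ0 : 0 ≤ γt := by
    rw [hγt]
    apply div_nonneg _ hpos.le
    rw [hXeq]
    linarith
  have hγ1 : γt ≤ 1 := by
    rw [hγt, div_le_one hpos]
    rw [hXeq]
    linarith
  -- pointwise facts
  have hmt0 : ∀ n, 0 ≤ mt n := fun n => by rw [hmt n]; exact le_max_right _ _
  have hht0 : ∀ n, 0 ≤ ht n := fun n => by rw [hht n]; exact le_max_right _ _
  have hDn : ∀ n, 0 ≤ μ n - mt n - ht n := by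
    intro n
    rw [hmt n, hht n]
    rcases max_cases (μ n - (s - (⌊s⌋ : ℝ)) / (⌊k⌋ : ℝ)) 0 with ⟨h1, _⟩ | ⟨h1, _⟩ <;>
      rcases max_cases (μ n - ((⌈s⌉ : ℝ) - s) / (⌊k⌋ : ℝ)) 0 with ⟨h2, _⟩ | ⟨h2, _⟩ <;>
      rw [h1, h2] <;> linarith [hab n, (hμ n).1, ha0, hb0]
  have hcap1 : ∀ n, μ n - ht n ≤ ((⌈s⌉ : ℝ) - s) / (⌊k⌋ : ℝ) := by
    intro n
    have : μ n - ((⌈s⌉ : ℝ) - s) / (⌊k⌋ : ℝ) ≤ ht n := by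
      rw [hht n]; exact le_max_left _ _
    linarith
  have hcap2 : ∀ n, μ n - mt n ≤ (s - (⌊s⌋ : ℝ)) / (⌊k⌋ : ℝ) := by
    intro n
    have : μ n - (s - (⌊s⌋ : ℝ)) / (⌊k⌋ : ℝ) ≤ mt n := by
      rw [hmt n]; exact le_max_left _ _
    linarith
  -- sum identities
  have hsum1 : (∑ n, μhat₁ n)
      = (∑ n, mt n) + (p - (∑ n, mt n) - (∑ n, ht n)) * γt := by
    calc (∑ n, μhat₁ n) = ∑ n, (mt n + (μ n - mt n - ht n) * γt) :=
          Finset.sum_congr rfl fun n _ => hμhat₁ n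
      _ = (∑ n, mt n) + (∑ n, (μ n - mt n - ht n)) * γt := by
          rw [Finset.sum_add_distrib, ← Finset.sum_mul]
      _ = _ := by rw [hp]; rw [Finset.sum_sub_distrib, Finset.sum_sub_distrib]
  have hsum2 : (∑ n, μhat₂ n)
      = (∑ n, ht n) + (p - (∑ n, mt n) - (∑ n, ht n)) * (1 - γt) := by
    calc (∑ n, μhat₂ n) = ∑ n, (ht n + (μ n - mt n - ht n) * (1 - γt)) :=
          Finset.sum_congr rfl fun n _ => hμhat₂ n
      _ = (∑ n, ht n) + (∑ n, (μ n - mt n - ht n)) * (1 - γt) := by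
          rw [Finset.sum_add_distrib, ← Finset.sum_mul]
      _ = _ := by rw [hp]; rw [Finset.sum_sub_distrib, Finset.sum_sub_distrib]
  have hmulγ : (p - (∑ n, mt n) - (∑ n, ht n)) * γt
      = ((⌊s⌋ : ℝ) / (⌊k⌋ : ℝ)) * ((⌈s⌉ : ℝ) - s) - (∑ n, mt n) := by
    rw [hγt, mul_comm]
    exact div_mul_cancel₀ _ (ne_of_gt hpos)
  refine ⟨?_, ?_, ?_, ?_, ?_⟩
  · intro n
    rw [hμhat₁ n, hμhat₂ n]; ring
  · intro n
    constructor
    · rw [hμhat₁ n]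
      exact add_nonneg (hmt0 n) (mul_nonneg (hDn n) hγ0)
    · rw [hμhat₁ n]
      have h1 : (μ n - mt n - ht n) * γt ≤ (μ n - mt n - ht n) * 1 :=
        mul_le_mul_of_nonneg_left hγ1 (hDn n)
      have := hcap1 n
      linarith
  · intro n
    constructor
    · rw [hμhat₂ n]
      exact add_nonneg (hht0 n) (mul_nonneg (hDn n) (by linarith))
    · rw [hμhat₂ n]
      have h1 : (μ n - mt n - ht n) * (1 - γt) ≤ (μ n - mt n - ht n) * 1 :=
        mul_le_mul_of_nonneg_left (by linarith) (hDn n)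
      have := hcap2 n
      linarith
  · rw [hsum1, hmulγ]
    have : ((⌊s⌋ : ℝ) / (⌊k⌋ : ℝ)) * ((⌈s⌉ : ℝ) - s)
        = ((⌈s⌉ : ℝ) - s) * (⌊s⌋ : ℝ) / (⌊k⌋ : ℝ) := by ring
    linarith
  · rw [hsum2]
    have h1 : (p - (∑ n, mt n) - (∑ n, ht n)) * (1 - γt)
        = (p - (∑ n, mt n) - (∑ n, ht n)) - ((p - (∑ n, mt n) - (∑ n, ht n)) * γt) := by
      ring
    rw [h1, hmulγ]
    have h2 : (s - (⌊s⌋ : ℝ)) * (⌈s⌉ : ℝ) / (⌊k⌋ : ℝ)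
        = (⌈s⌉ : ℝ) * ((s - (⌊s⌋ : ℝ)) / (⌊k⌋ : ℝ)) := by ring
    rw [h2]
    linarith [hABp, hXeq]
end

section
/- Let N ≥ 1 be an integer, let ν : {1,…,N} → ℝ and let c₁, c₂ ≥ 0 satisfy 0 ≤ ν(n) ≤ c₁ + c₂ for all n. Set S = Σ_n ν(n), m(n) = max(ν(n) − c₂, 0), h(n) = max(ν(n) − c₁, 0), and let S₁ be a real number with Σ_n m(n) ≤ S₁ ≤ S − Σ_n h(n). Assume D := S − Σ_n m(n) − Σ_n h(n) > 0 and set γ = (S₁ − Σ_n m(n))/D, ν₁(n) = m(n) + (ν(n) − m(n) − h(n))γ and ν₂(n) = h(n) + (ν(n) − m(n) − h(n))(1 − γ). Then 0 ≤ γ ≤ 1, and for every n: ν₁(n) + ν₂(n) = ν(n), 0 ≤ ν₁(n) ≤ c₁ and 0 ≤ ν₂(n) ≤ c₂; moreover Σ_n ν₁(n) = S₁ and Σ_n ν₂(n) = S − S₁. -/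
open Finset

/-! The split is the affine interpolation, with parameter `γ ∈ [0, 1]`, between the two extreme
splits `(m, ν - m)` and `(ν - h, h)`. Both respect the caps `c₁, c₂`, since `ν - m = min ν c₂`
and `ν - h = min ν c₁`, so every intermediate split does too; `γ` is the unique parameter that
makes the first total equal to `S₁`, and it lies in `[0, 1]` exactly because
`∑ m ≤ S₁ ≤ S - ∑ h`. -/

lemma add_mul_mem_Icc_add {a t γ : ℝ} (ht : 0 ≤ t) (hγ : γ ∈ Set.Icc (0 : ℝ) 1) :
    a + t * γ ∈ Set.Icc a (a + t) :=
  ⟨le_add_of_nonneg_right (mul_nonneg ht hγ.1),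
    add_le_add_right (mul_le_of_le_one_right ht hγ.2) a⟩

lemma max_sub_zero_add_max_sub_zero_le {x c₁ c₂ : ℝ} (hc₁ : 0 ≤ c₁) (hc₂ : 0 ≤ c₂)
    (hx₀ : 0 ≤ x) (hx : x ≤ c₁ + c₂) : max (x - c₂) 0 + max (x - c₁) 0 ≤ x := by
  rcases max_cases (x - c₂) 0 with ⟨h₂, _⟩ | ⟨h₂, _⟩ <;>
    rcases max_cases (x - c₁) 0 with ⟨h₁, _⟩ | ⟨h₁, _⟩ <;> linarith

lemma max_sub_zero_add_mul_mem_Icc {x c₁ c₂ γ : ℝ} (hc₁ : 0 ≤ c₁) (hc₂ : 0 ≤ c₂)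
    (hx₀ : 0 ≤ x) (hx : x ≤ c₁ + c₂) (hγ : γ ∈ Set.Icc (0 : ℝ) 1) :
    max (x - c₂) 0 + (x - max (x - c₂) 0 - max (x - c₁) 0) * γ ∈ Set.Icc 0 c₁ := by
  have hgap := max_sub_zero_add_max_sub_zero_le hc₁ hc₂ hx₀ hx
  obtain ⟨hlow, hupp⟩ :=
    add_mul_mem_Icc_add (a := max (x - c₂) 0) (t := x - max (x - c₂) 0 - max (x - c₁) 0)
      (by linarith) hγ
  exact ⟨(le_max_right _ _).trans hlow, hupp.trans (by linarith [le_max_left (x - c₁) 0])⟩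

theorem pruw_generic_splitting_general
    (N : ℕ) (ν : Fin N → ℝ) (c₁ c₂ : ℝ)
    (hc₁ : 0 ≤ c₁) (hc₂ : 0 ≤ c₂)
    (hν : ∀ n, 0 ≤ ν n ∧ ν n ≤ c₁ + c₂)
    (S : ℝ) (hS : S = ∑ n, ν n)
    (m h : Fin N → ℝ)
    (hm : ∀ n, m n = max (ν n - c₂) 0)
    (hh : ∀ n, h n = max (ν n - c₁) 0)
    (S₁ : ℝ) (hS₁lb : (∑ n, m n) ≤ S₁) (hS₁ub : S₁ ≤ S - ∑ n, h n)
    (D : ℝ) (hD : D = S - (∑ n, m n) - (∑ n, h n)) (hDpos : 0 < D)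
    (γ : ℝ) (hγ : γ = (S₁ - ∑ n, m n) / D)
    (ν₁ ν₂ : Fin N → ℝ)
    (hν₁ : ∀ n, ν₁ n = m n + (ν n - m n - h n) * γ)
    (hν₂ : ∀ n, ν₂ n = h n + (ν n - m n - h n) * (1 - γ)) :
    0 ≤ γ ∧ γ ≤ 1 ∧
    (∀ n, ν₁ n + ν₂ n = ν n) ∧
    (∀ n, 0 ≤ ν₁ n ∧ ν₁ n ≤ c₁) ∧
    (∀ n, 0 ≤ ν₂ n ∧ ν₂ n ≤ c₂) ∧
    (∑ n, ν₁ n) = S₁ ∧ (∑ n, ν₂ n) = S - S₁ := by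
  have hγI : γ ∈ Set.Icc (0 : ℝ) 1 :=
    hγ ▸ ⟨div_nonneg (by linarith) hDpos.le, (div_le_one hDpos).2 (by linarith)⟩
  have hsplit n : ν₁ n + ν₂ n = ν n := by rw [hν₁, hν₂]; ring
  have hsum₁ : ∑ n, ν₁ n = S₁ := by
    simp only [hν₁]
    rw [sum_add_distrib, ← sum_mul, sum_sub_distrib, sum_sub_distrib, ← hS, ← hD, hγ,
      mul_div_cancel₀ _ hDpos.ne']
    ring
  refine ⟨hγI.1, hγI.2, hsplit, fun n => ?_, fun n => ?_, hsum₁, ?_⟩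
  · rw [hν₁, hm, hh]
    exact max_sub_zero_add_mul_mem_Icc hc₁ hc₂ (hν n).1 (hν n).2 hγI
  · -- the first share with `c₁, c₂` swapped and `γ` replaced by `1 - γ`
    rw [hν₂, hm, hh, sub_right_comm]
    exact max_sub_zero_add_mul_mem_Icc hc₂ hc₁ (hν n).1 (add_comm c₁ c₂ ▸ (hν n).2)
      (Set.Icc.mem_iff_one_sub_mem.1 hγI)
  · rw [hS, ← hsum₁, ← sum_sub_distrib]
    exact sum_congr rfl fun n _ => by linarith [hsplit n]

/-- Generic storage-splitting construction used in Lemmas 1 and 2: the storage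
`ν(n)` of each database is split into `ν₁(n) + ν₂(n) = ν(n)` respecting the
per-database caps `c₁, c₂` and the prescribed global totals `S₁` and `S − S₁`. -/
theorem pruw_generic_splitting
    (N : ℕ) (hN : 1 ≤ N) (ν : Fin N → ℝ) (c₁ c₂ : ℝ)
    (hc₁ : 0 ≤ c₁) (hc₂ : 0 ≤ c₂)
    (hν : ∀ n, 0 ≤ ν n ∧ ν n ≤ c₁ + c₂)
    (S : ℝ) (hS : S = ∑ n, ν n)
    (m h : Fin N → ℝ)
    (hm : ∀ n, m n = max (ν n - c₂) 0)
    (hh : ∀ n, h n = max (ν n - c₁) 0)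
    (S₁ : ℝ) (hS₁lb : (∑ n, m n) ≤ S₁) (hS₁ub : S₁ ≤ S - ∑ n, h n)
    (D : ℝ) (hD : D = S - (∑ n, m n) - (∑ n, h n)) (hDpos : 0 < D)
    (γ : ℝ) (hγ : γ = (S₁ - ∑ n, m n) / D)
    (ν₁ ν₂ : Fin N → ℝ)
    (hν₁ : ∀ n, ν₁ n = m n + (ν n - m n - h n) * γ)
    (hν₂ : ∀ n, ν₂ n = h n + (ν n - m n - h n) * (1 - γ)) :
    0 ≤ γ ∧ γ ≤ 1 ∧
    (∀ n, ν₁ n + ν₂ n = ν n) ∧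
    (∀ n, 0 ≤ ν₁ n ∧ ν₁ n ≤ c₁) ∧
    (∀ n, 0 ≤ ν₂ n ∧ ν₂ n ≤ c₂) ∧
    (∑ n, ν₁ n) = S₁ ∧ (∑ n, ν₂ n) = S - S₁ :=
  pruw_generic_splitting_general N ν c₁ c₂ hc₁ hc₂ hν S hS m h hm hh S₁ hS₁lb hS₁ub D hD hDpos γ hγ
    ν₁ ν₂ hν₁ hν₂
end

section
/- Let N ≥ 1 be an integer, μ : {1,…,N} → ℝ with 0 ≤ μ(n) ≤ μ̄ = max_m μ(m) for all n, let k = 1/μ̄ with k > 1 and k ∉ ℤ, p = Σ_n μ(n), r = kp with r ∉ ℤ. Let α, β, δ satisfy ⌊k⌋(⌈k⌉−k)/k ≤ α < 1, 0 ≤ β ≤ 1, 0 ≤ δ ≤ 1, β ≥ max(1 − (⌊k⌋/(kα))(r−⌊r⌋), 0), δ ≥ max(1 − (⌈k⌉/(k(1−α)))(r−⌊r⌋), 0), and α(⌈r⌉−β)/⌊k⌋ + (1−α)(⌈r⌉−δ)/⌈k⌉ = p. Define m(n) = max(μ(n) − (1−α)/⌈k⌉, 0), h(n) = max(μ(n)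 − α/⌊k⌋, 0), γ = ( (α/⌊k⌋)(⌈r⌉−β) − Σ_n m(n) ) / ( p − Σ_n m(n) − Σ_n h(n) ), μ̂(n) = m(n) + (μ(n)−m(n)−h(n))γ and μ̄ᵛ(n) = h(n) + (μ(n)−m(n)−h(n))(1−γ); then define m̂(n) = max(μ̂(n) − α(1−β)/⌊k⌋, 0), ĥ(n) = max(μ̂(n) − αβ/⌊k⌋, 0), γ̂ = ( (αβ/⌊k⌋)⌊r⌋ − Σ_n m̂(n) ) / ( (α/⌊k⌋)(⌈r⌉−β) − Σ_n m̂(n) − Σ_n ĥ(n) ), and μ̂₁(n) = m̂(n) + (μ̂(n)−m̂(n)−ĥ(n))γ̂, μ̂₂(n) = μ̂(n) − μ̂₁(n) if 0 < β < 1, while μ̂₁(n) = μ̂(n)β, μ̂₂(n) = μ̂(n)(1−β) if β ∈ {0,1}; analogously define m̄(n) = max(μ̄ᵛ(n) − (1−α)(1−δ)/⌈k⌉, 0), h̄(n) = max(μ̄ᵛ(n) − (1−α)δ/⌈k⌉, 0), γ̄ = ( ((1−α)δ/⌈k⌉)⌊r⌋ − Σ_n m̄(n) ) / ( ((1−α)/⌈k⌉)(⌈r⌉−δ)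 − Σ_n m̄(n) − Σ_n h̄(n) ), and μ̄₁(n) = m̄(n) + (μ̄ᵛ(n)−m̄(n)−h̄(n))γ̄, μ̄₂(n) = μ̄ᵛ(n) − μ̄₁(n) if 0 < δ < 1, while μ̄₁(n) = μ̄ᵛ(n)δ, μ̄₂(n) = μ̄ᵛ(n)(1−δ) if δ ∈ {0,1} (all appearing denominators assumed nonzero). Then for every n: μ̂₁(n) + μ̂₂(n) + μ̄₁(n) + μ̄₂(n) = μ(n), 0 ≤ μ̂₁(n) ≤ αβ/⌊k⌋, 0 ≤ μ̂₂(n) ≤ α(1−β)/⌊k⌋, 0 ≤ μ̄₁(n) ≤ (1−α)δ/⌈k⌉, 0 ≤ μ̄₂(n) ≤ (1−α)(1−δ)/⌈k⌉; and the totals satisfy Σ_n μ̂₁(n) = αβ⌊r⌋/⌊k⌋, Σ_n μ̂₂(n) = α(1−β)⌈r⌉/⌊k⌋, Σ_n μ̄₁(n) = (1−α)δ⌊r⌋/⌈k⌉ and Σ_n μ̄₂(n) = (1−α)(1−δ)⌈r⌉/⌈k⌉. -/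
/-!
Each split is a water-filling. A database holding `t` must give at least `max (t - c₂) 0` to the
first code and at least `max (t - c₁) 0` to the second; of the rest, the same fraction `γ` goes to
the first code everywhere, chosen so that its total is exactly `T`. This works as soon as the
forced amounts fit into the totals. They do by a counting argument: if every `x i ≤ c` and at most
`M` of them exceed `a`, the excess over `a` is at most `M (c - a)`; otherwise at least `M + 1` of
them exceed `a` and the excess is at most `∑ x - (M + 1) a`. With `M = ⌊r⌋`, the conditions on
`α`, `β`, `δ` are exactly what makes both bounds fit, first for the split of `μ` between the
`⌊k⌋` and `⌈k⌉` codes and then for the split of each part between `⌊r⌋` and `⌈r⌉`.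
-/

open Finset

theorem max_sub_add_max_sub_le {t c₁ c₂ : ℝ} (hc₁ : 0 ≤ c₁) (hc₂ : 0 ≤ c₂)
    (ht : 0 ≤ t ∧ t ≤ c₁ + c₂) : max (t - c₂) 0 + max (t - c₁) 0 ≤ t := by
  simp only [max_add, add_max, max_le_iff]
  refine ⟨⟨?_, ?_⟩, ?_, ?_⟩ <;> linarith

theorem waterfill_mem {t l h g s c₁ c₂ : ℝ} (hc₁ : 0 ≤ c₁) (hc₂ : 0 ≤ c₂)
    (ht : 0 ≤ t ∧ t ≤ c₁ + c₂) (hl : l = max (t - c₂) 0) (hh : h = max (t - c₁) 0)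
    (hg : 0 ≤ g ∧ g ≤ 1) (hs : s = l + (t - l - h) * g) :
    (0 ≤ s ∧ s ≤ c₁) ∧ (0 ≤ t - s ∧ t - s ≤ c₂) := by
  subst hl hh hs
  have hfree : 0 ≤ t - max (t - c₂) 0 - max (t - c₁) 0 := by
    linarith [max_sub_add_max_sub_le hc₁ hc₂ ht]
  refine ⟨⟨?_, ?_⟩, ?_, ?_⟩ <;>
    linarith [mul_nonneg hfree hg.1, mul_le_of_le_one_right hfree hg.2, le_max_left (t - c₂) 0,
      le_max_right (t - c₂) 0, le_max_left (t - c₁) 0, le_max_right (t - c₁) 0]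

section Waterfill

variable {ι : Type*} [Fintype ι] {x lo hi y z : ι → ℝ} {c₁ c₂ S T γ : ℝ}

structure IsSplit (c₁ c₂ T₁ T₂ : ℝ) (x y z : ι → ℝ) : Prop where
  add_eq : ∀ i, y i + z i = x i
  mem_fst : ∀ i, 0 ≤ y i ∧ y i ≤ c₁
  mem_snd : ∀ i, 0 ≤ z i ∧ z i ≤ c₂
  sum_fst : ∑ i, y i = T₁
  sum_snd : ∑ i, z i = T₂

theorem isSplit_waterfill (hc₁ : 0 ≤ c₁) (hc₂ : 0 ≤ c₂) (hx : ∀ i, 0 ≤ x i ∧ x i ≤ c₁ + c₂)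
    (hS : ∑ i, x i = S) (hlo : ∀ i, lo i = max (x i - c₂) 0)
    (hhi : ∀ i, hi i = max (x i - c₁) 0) (hloT : ∑ i, lo i ≤ T) (hhiT : ∑ i, hi i ≤ S - T)
    (hγ : γ = (T - ∑ i, lo i) / (S - ∑ i, lo i - ∑ i, hi i))
    (hy : ∀ i, y i = lo i + (x i - lo i - hi i) * γ) (hz : ∀ i, z i = x i - y i) :
    IsSplit c₁ c₂ T (S - T) x y z := by
  have hfree : S - ∑ i, lo i - ∑ i, hi i = ∑ i, (x i - lo i - hi i) := by
    simp only [sum_sub_distrib, hS]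
  have hD : 0 ≤ S - ∑ i, lo i - ∑ i, hi i := by
    rw [hfree]
    refine sum_nonneg fun i _ => ?_
    rw [hlo, hhi]
    linarith [max_sub_add_max_sub_le hc₁ hc₂ (hx i)]
  have hγ01 : 0 ≤ γ ∧ γ ≤ 1 := by
    rw [hγ]
    exact ⟨div_nonneg (by linarith) hD, div_le_one_of_le₀ (by linarith) hD⟩
  have hmem i := waterfill_mem hc₁ hc₂ (hx i) (hlo i) (hhi i) hγ01 (hy i)
  have hsum : ∑ i, y i = T := by
    have hcancel : (S - ∑ i, lo i - ∑ i, hi i) * γ = T - ∑ i, lo i := by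
      rw [hγ]
      -- a vanishing denominator forces `T = ∑ lo`, so the junk value `γ = 0` is harmless
      exact mul_div_cancel_of_imp' fun h0 => by linarith
    simp only [hy, sum_add_distrib, ← sum_mul, ← hfree, hcancel]
    ring
  refine ⟨fun i => by rw [hz]; ring, fun i => (hmem i).1, fun i => hz i ▸ (hmem i).2, hsum, ?_⟩
  simp only [hz, sum_sub_distrib, hS, hsum]

theorem sum_max_sub_le (M : ℤ) {a c e : ℝ} (hx : ∀ i, 0 ≤ x i ∧ x i ≤ c) (ha : 0 ≤ a)
    (he : 0 ≤ e) (hrem : a - e ≤ ∑ i, x i - M * c) (hsum : (M + 1) * a - e ≤ ∑ i, x i) :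
    ∑ i, max (x i - a) 0 ≤ ∑ i, x i - ((M + 1) * a - e) := by
  rcases lt_or_ge c a with hca | hac
  · rw [sum_eq_zero fun i _ => max_eq_right (by linarith [(hx i).2])]
    linarith
  set P := univ.filter fun i => a < x i
  have hP : ∑ i, max (x i - a) 0 = ∑ i ∈ P, (x i - a) := by
    rw [sum_filter]
    refine sum_congr rfl fun i _ => ?_
    split_ifs with hi
    · exact max_eq_left (by linarith)
    · exact max_eq_right (by linarith)
  rw [hP]
  rcases le_or_gt (#P : ℤ) M with hPM | hPM
  · have hPM' : (#P : ℝ) ≤ M := by exact_mod_cast hPM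
    calc ∑ i ∈ P, (x i - a) ≤ ∑ i ∈ P, (c - a) := sum_le_sum fun i _ => by linarith [(hx i).2]
      _ = #P * (c - a) := by rw [sum_const, nsmul_eq_mul]
      _ ≤ M * (c - a) := mul_le_mul_of_nonneg_right hPM' (by linarith)
      _ ≤ _ := by linarith
  · have hPM' : (M : ℝ) + 1 ≤ #P := by exact_mod_cast hPM
    have hPx : ∑ i ∈ P, x i ≤ ∑ i, x i :=
      sum_le_sum_of_subset_of_nonneg (subset_univ P) fun i _ _ => (hx i).1
    calc ∑ i ∈ P, (x i - a) = ∑ i ∈ P, x i - #P * a := by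
          rw [sum_sub_distrib, sum_const, nsmul_eq_mul]
      _ ≤ ∑ i, x i - (M + 1) * a := by nlinarith
      _ ≤ _ := by linarith

theorem isSplit_waterfill_balanced {M : ℤ} {a b c C β δ : ℝ} (ha : 0 ≤ a) (hb : 0 ≤ b)
    (hM : 0 ≤ M) (hβ : 0 ≤ β) (hβ1 : β ≤ 1) (hδ : 0 ≤ δ) (hδ1 : δ ≤ 1) (hC : C = M + 1)
    (hx : ∀ i, 0 ≤ x i ∧ x i ≤ c) (hcap : c ≤ a + b) (hS : ∑ i, x i = S)
    (hbal : a * (C - β) + b * (C - δ) = S)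
    (hβrem : a * (1 - β) ≤ S - M * c) (hδrem : b * (1 - δ) ≤ S - M * c)
    (hlo : ∀ i, lo i = max (x i - b) 0) (hhi : ∀ i, hi i = max (x i - a) 0)
    (hγ : γ = (a * (C - β) - ∑ i, lo i) / (S - ∑ i, lo i - ∑ i, hi i))
    (hy : ∀ i, y i = lo i + (x i - lo i - hi i) * γ) (hz : ∀ i, z i = x i - y i) :
    IsSplit a b (a * (C - β)) (b * (C - δ)) x y z := by
  have hMR : (0 : ℝ) ≤ M := by exact_mod_cast hM
  have hhiT := sum_max_sub_le M hx ha (mul_nonneg ha hβ) (by linarith)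
    (by nlinarith [mul_nonneg hb (by linarith : (0 : ℝ) ≤ C - δ)])
  have hloT := sum_max_sub_le M hx hb (mul_nonneg hb hδ) (by linarith)
    (by nlinarith [mul_nonneg ha (by linarith : (0 : ℝ) ≤ C - β)])
  have h := isSplit_waterfill ha hb (fun i => ⟨(hx i).1, (hx i).2.trans hcap⟩) hS hlo hhi
    (by simp only [hlo]; nlinarith) (by simp only [hhi]; nlinarith) hγ hy hz
  rwa [← hbal, add_sub_cancel_left] at h

theorem isSplit_waterfill_fraction {M : ℤ} {w d C β : ℝ} (hc : 0 ≤ w / d) (hM : 0 ≤ M)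
    (hβ0 : 0 ≤ β) (hβ1 : β ≤ 1) (hC : C = M + 1) (hx : ∀ i, 0 ≤ x i ∧ x i ≤ w / d)
    (hS : ∑ i, x i = w / d * (C - β))
    (hlo : ∀ i, lo i = max (x i - w * (1 - β) / d) 0) (hhi : ∀ i, hi i = max (x i - w * β / d) 0)
    (hγ : γ = (w * β / d * M - ∑ i, lo i) / (w / d * (C - β) - ∑ i, lo i - ∑ i, hi i))
    (hmid : 0 < β → β < 1 → ∀ i, y i = lo i + (x i - lo i - hi i) * γ ∧ z i = x i - y i)
    (hend : β = 0 ∨ β = 1 → ∀ i, y i = x i * β ∧ z i = x i * (1 - β)) :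
    IsSplit (w * β / d) (w * (1 - β) / d) (w * β * M / d) (w * (1 - β) * C / d) x y z := by
  have hMR : (0 : ℝ) ≤ M := by exact_mod_cast hM
  subst hC
  simp only [mul_div_right_comm w] at hlo hhi hγ ⊢
  set c := w / d
  by_cases hE : β = 0 ∨ β = 1
  · have hβ' : β * (1 - β) = 0 := by rcases hE with h | h <;> simp [h]
    have hd := hend hE
    refine ⟨fun i => by rw [(hd i).1, (hd i).2]; ring, fun i => ?_, fun i => ?_, ?_, ?_⟩
    · rw [(hd i).1]
      exact ⟨mul_nonneg (hx i).1 hβ0, mul_le_mul_of_nonneg_right (hx i).2 hβ0⟩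
    · rw [(hd i).2]
      exact ⟨mul_nonneg (hx i).1 (by linarith),
        mul_le_mul_of_nonneg_right (hx i).2 (by linarith)⟩
    · simp only [(hd _).1, ← sum_mul, hS]
      linear_combination c * hβ'
    · simp only [(hd _).2, ← sum_mul, hS]
      linear_combination -c * hβ'
  · obtain ⟨hβ0', hβ1'⟩ := not_or.1 hE
    have hdefs := hmid (hβ0.lt_of_ne (Ne.symm hβ0')) (hβ1.lt_of_ne hβ1')
    have hcβ : 0 ≤ c * β := mul_nonneg hc hβ0
    have hcβ' : 0 ≤ c * (1 - β) := mul_nonneg hc (by linarith)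
    have hloT := sum_max_sub_le M hx hcβ' le_rfl (by rw [hS]; linarith) (by rw [hS]; nlinarith)
    have hhiT := sum_max_sub_le M hx hcβ hcβ (by rw [hS]; nlinarith) (by rw [hS]; nlinarith)
    simp only [← hlo, ← hhi, hS] at hloT hhiT
    have h := isSplit_waterfill hcβ hcβ' (fun i => ⟨(hx i).1, by linarith [(hx i).2]⟩) hS hlo
      hhi (by linarith) (by linarith) hγ (fun i => (hdefs i).1) (fun i => (hdefs i).2)
    convert h using 2 <;> simp only [c] <;> ring

end Waterfill

theorem one_div_le_div_add_div {k K C α : ℝ} (hK : 0 < K) (hk : 0 < k) (hC : C = K + 1)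
    (hα : K * (C - k) / k ≤ α) : 1 / k ≤ α / K + (1 - α) / C := by
  subst hC
  rw [div_le_iff₀ hk] at hα
  rw [div_add_div _ _ hK.ne' (by positivity), div_le_div_iff₀ hk (by positivity)]
  nlinarith

theorem div_mul_one_sub_le {w K k t β : ℝ} (hw : 0 < w) (hK : 0 < K) (hk : 0 < k)
    (hβ : 1 - K / (k * w) * t ≤ β) : w / K * (1 - β) ≤ t / k :=
  calc w / K * (1 - β) ≤ w / K * (K / (k * w) * t) :=
        mul_le_mul_of_nonneg_left (by linarith) (by positivity)
    _ = t / k := by field_simp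

theorem ceil_eq_floor_add_one {x : ℝ} (hx : ∀ z : ℤ, x ≠ z) : (⌈x⌉ : ℝ) = ⌊x⌋ + 1 := by
  exact_mod_cast (Int.ceil_eq_floor_add_one_iff_notMem x).2 fun ⟨z, hz⟩ => hx z hz.symm

theorem pruw_lemma2_storage_allocation_general
    (N : ℕ) (μ : Fin N → ℝ)
    (μbar : ℝ) (hμ : ∀ n, 0 ≤ μ n ∧ μ n ≤ μbar)
    (k p r : ℝ) (hk : k = 1 / μbar) (hk1 : 1 < k)
    (hknotint : ∀ z : ℤ, k ≠ (z : ℝ))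
    (hp : p = ∑ n, μ n) (hr : r = k * p) (hrnotint : ∀ z : ℤ, r ≠ (z : ℝ))
    (α β δ : ℝ)
    (hαlb : (⌊k⌋ : ℝ) * ((⌈k⌉ : ℝ) - k) / k ≤ α) (hαub : α < 1)
    (hβ0 : 0 ≤ β) (hβ1 : β ≤ 1) (hδ0 : 0 ≤ δ) (hδ1 : δ ≤ 1)
    (hβlb : β ≥ max (1 - ((⌊k⌋ : ℝ) / (k * α)) * (r - (⌊r⌋ : ℝ))) 0)
    (hδlb : δ ≥ max (1 - ((⌈k⌉ : ℝ) / (k * (1 - α))) * (r - (⌊r⌋ : ℝ))) 0)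
    (hbalance : α * ((⌈r⌉ : ℝ) - β) / (⌊k⌋ : ℝ) +
      (1 - α) * ((⌈r⌉ : ℝ) - δ) / (⌈k⌉ : ℝ) = p)
    -- first-level split
    (m h : Fin N → ℝ)
    (hm : ∀ n, m n = max (μ n - (1 - α) / (⌈k⌉ : ℝ)) 0)
    (hh : ∀ n, h n = max (μ n - α / (⌊k⌋ : ℝ)) 0)
    (γ : ℝ)
    (hγ : γ = ((α / (⌊k⌋ : ℝ)) * ((⌈r⌉ : ℝ) - β) - ∑ n, m n) /
      (p - (∑ n, m n) - (∑ n, h n)))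
    (μhat μbarv : Fin N → ℝ)
    (hμhat : ∀ n, μhat n = m n + (μ n - m n - h n) * γ)
    (hμbarv : ∀ n, μbarv n = h n + (μ n - m n - h n) * (1 - γ))
    -- second-level split of μhat according to β
    (mhat hhat : Fin N → ℝ)
    (hmhat : ∀ n, mhat n = max (μhat n - α * (1 - β) / (⌊k⌋ : ℝ)) 0)
    (hhhat : ∀ n, hhat n = max (μhat n - α * β / (⌊k⌋ : ℝ)) 0)
    (γhat : ℝ)
    (hγhat : γhat = ((α * β / (⌊k⌋ : ℝ)) * (⌊r⌋ : ℝ) - ∑ n, mhat n) /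
      ((α / (⌊k⌋ : ℝ)) * ((⌈r⌉ : ℝ) - β) - (∑ n, mhat n) - ∑ n, hhat n))
    (μhat₁ μhat₂ : Fin N → ℝ)
    (hβmid : 0 < β → β < 1 →
      ((α / (⌊k⌋ : ℝ)) * ((⌈r⌉ : ℝ) - β) - (∑ n, mhat n) - (∑ n, hhat n) ≠ 0 ∧
        ∀ n, μhat₁ n = mhat n + (μhat n - mhat n - hhat n) * γhat ∧
          μhat₂ n = μhat n - μhat₁ n))
    (hβend : (β = 0 ∨ β = 1) →
      ∀ n, μhat₁ n = μhat n * β ∧ μhat₂ n = μhat n * (1 - β))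
    -- second-level split of μbarv according to δ
    (mbar hbar : Fin N → ℝ)
    (hmbar : ∀ n, mbar n = max (μbarv n - (1 - α) * (1 - δ) / (⌈k⌉ : ℝ)) 0)
    (hhbar : ∀ n, hbar n = max (μbarv n - (1 - α) * δ / (⌈k⌉ : ℝ)) 0)
    (γbar : ℝ)
    (hγbar : γbar = (((1 - α) * δ / (⌈k⌉ : ℝ)) * (⌊r⌋ : ℝ) - ∑ n, mbar n) /
      (((1 - α) / (⌈k⌉ : ℝ)) * ((⌈r⌉ : ℝ) - δ) - (∑ n, mbar n) - ∑ n, hbar n))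
    (μbar₁ μbar₂ : Fin N → ℝ)
    (hδmid : 0 < δ → δ < 1 →
      (((1 - α) / (⌈k⌉ : ℝ)) * ((⌈r⌉ : ℝ) - δ) - (∑ n, mbar n) - (∑ n, hbar n) ≠ 0 ∧
        ∀ n, μbar₁ n = mbar n + (μbarv n - mbar n - hbar n) * γbar ∧
          μbar₂ n = μbarv n - μbar₁ n))
    (hδend : (δ = 0 ∨ δ = 1) →
      ∀ n, μbar₁ n = μbarv n * δ ∧ μbar₂ n = μbarv n * (1 - δ)) :
    (∀ n, μhat₁ n + μhat₂ n + μbar₁ n + μbar₂ n = μ n) ∧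
    (∀ n, 0 ≤ μhat₁ n ∧ μhat₁ n ≤ α * β / (⌊k⌋ : ℝ)) ∧
    (∀ n, 0 ≤ μhat₂ n ∧ μhat₂ n ≤ α * (1 - β) / (⌊k⌋ : ℝ)) ∧
    (∀ n, 0 ≤ μbar₁ n ∧ μbar₁ n ≤ (1 - α) * δ / (⌈k⌉ : ℝ)) ∧
    (∀ n, 0 ≤ μbar₂ n ∧ μbar₂ n ≤ (1 - α) * (1 - δ) / (⌈k⌉ : ℝ)) ∧
    (∑ n, μhat₁ n) = α * β * (⌊r⌋ : ℝ) / (⌊k⌋ : ℝ) ∧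
    (∑ n, μhat₂ n) = α * (1 - β) * (⌈r⌉ : ℝ) / (⌊k⌋ : ℝ) ∧
    (∑ n, μbar₁ n) = (1 - α) * δ * (⌊r⌋ : ℝ) / (⌈k⌉ : ℝ) ∧
    (∑ n, μbar₂ n) = (1 - α) * (1 - δ) * (⌈r⌉ : ℝ) / (⌈k⌉ : ℝ) := by
  have hk0 : 0 < k := one_pos.trans hk1
  have hμbar' : μbar = 1 / k := by rw [hk, one_div_one_div]
  have hkC := ceil_eq_floor_add_one hknotint
  have hrC := ceil_eq_floor_add_one hrnotint
  have hK : (0 : ℝ) < ⌊k⌋ := by exact_mod_cast Int.floor_pos.2 hk1.le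
  have hK' : (0 : ℝ) < ⌈k⌉ := by exact_mod_cast Int.ceil_pos.2 hk0
  have hR : 0 ≤ ⌊r⌋ :=
    Int.floor_nonneg.2 (hr ▸ mul_nonneg hk0.le (hp ▸ sum_nonneg fun n _ => (hμ n).1))
  have hα : 0 < α :=
    (div_pos (mul_pos hK (by linarith [Int.lt_floor_add_one k])) hk0).trans_le hαlb
  have ha : 0 ≤ α / ⌊k⌋ := (div_pos hα hK).le
  have hb : 0 ≤ (1 - α) / ⌈k⌉ := (div_pos (sub_pos.2 hαub) hK').le
  have hrem : (r - ⌊r⌋) / k = p - ⌊r⌋ * μbar := by rw [hr, hμbar']; field_simp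
  have hfirst : IsSplit (α / ⌊k⌋) ((1 - α) / ⌈k⌉) _ _ μ μhat μbarv :=
    isSplit_waterfill_balanced ha hb hR hβ0 hβ1 hδ0 hδ1 hrC hμ
      (hμbar' ▸ one_div_le_div_add_div hK hk0 hkC hαlb) hp.symm (by rw [← hbalance]; ring)
      ((div_mul_one_sub_le hα hK hk0 ((le_max_left _ _).trans hβlb)).trans_eq hrem)
      ((div_mul_one_sub_le (sub_pos.2 hαub) hK' hk0 ((le_max_left _ _).trans hδlb)).trans_eq hrem)
      hm hh hγ hμhat fun n => by rw [hμbarv, hμhat]; ring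
  have hβside := isSplit_waterfill_fraction ha hR hβ0 hβ1 hrC hfirst.mem_fst hfirst.sum_fst
    hmhat hhhat hγhat (fun h₀ h₁ => (hβmid h₀ h₁).2) hβend
  have hδside := isSplit_waterfill_fraction hb hR hδ0 hδ1 hrC hfirst.mem_snd hfirst.sum_snd
    hmbar hhbar hγbar (fun h₀ h₁ => (hδmid h₀ h₁).2) hδend
  exact ⟨fun n => by linarith [hfirst.add_eq n, hβside.add_eq n, hδside.add_eq n],
    hβside.mem_fst, hβside.mem_snd, hδside.mem_fst, hδside.mem_snd,
    hβside.sum_fst, hβside.sum_snd, hδside.sum_fst, hδside.sum_snd⟩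

/-- Lemma 2 of the paper: the per-database storage allocations
`μ̂₁(n), μ̂₂(n), μ̄₁(n), μ̄₂(n)` devoted to the `(⌊k⌋,⌊r⌋)`, `(⌊k⌋,⌈r⌉)`,
`(⌈k⌉,⌊r⌋)`, `(⌈k⌉,⌈r⌉)` MDS codes add up to `μ(n)`, respect the
per-database caps, and have the prescribed global totals. -/
theorem pruw_lemma2_storage_allocation
    (N : ℕ) (hN : 1 ≤ N) (μ : Fin N → ℝ)
    (μbar : ℝ) (hμ : ∀ n, 0 ≤ μ n ∧ μ n ≤ μbar)
    (hμbar : IsGreatest (Set.range μ) μbar)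
    (k p r : ℝ) (hk : k = 1 / μbar) (hk1 : 1 < k)
    (hknotint : ∀ z : ℤ, k ≠ (z : ℝ))
    (hp : p = ∑ n, μ n) (hr : r = k * p) (hrnotint : ∀ z : ℤ, r ≠ (z : ℝ))
    (α β δ : ℝ)
    (hαlb : (⌊k⌋ : ℝ) * ((⌈k⌉ : ℝ) - k) / k ≤ α) (hαub : α < 1)
    (hβ0 : 0 ≤ β) (hβ1 : β ≤ 1) (hδ0 : 0 ≤ δ) (hδ1 : δ ≤ 1)
    (hβlb : β ≥ max (1 - ((⌊k⌋ : ℝ) / (k * α)) * (r - (⌊r⌋ : ℝ))) 0)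
    (hδlb : δ ≥ max (1 - ((⌈k⌉ : ℝ) / (k * (1 - α))) * (r - (⌊r⌋ : ℝ))) 0)
    (hbalance : α * ((⌈r⌉ : ℝ) - β) / (⌊k⌋ : ℝ) +
      (1 - α) * ((⌈r⌉ : ℝ) - δ) / (⌈k⌉ : ℝ) = p)
    -- first-level split
    (m h : Fin N → ℝ)
    (hm : ∀ n, m n = max (μ n - (1 - α) / (⌈k⌉ : ℝ)) 0)
    (hh : ∀ n, h n = max (μ n - α / (⌊k⌋ : ℝ)) 0)
    (hden : p - (∑ n, m n) - (∑ n, h n) ≠ 0)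
    (γ : ℝ)
    (hγ : γ = ((α / (⌊k⌋ : ℝ)) * ((⌈r⌉ : ℝ) - β) - ∑ n, m n) /
      (p - (∑ n, m n) - (∑ n, h n)))
    (μhat μbarv : Fin N → ℝ)
    (hμhat : ∀ n, μhat n = m n + (μ n - m n - h n) * γ)
    (hμbarv : ∀ n, μbarv n = h n + (μ n - m n - h n) * (1 - γ))
    -- second-level split of μhat according to β
    (mhat hhat : Fin N → ℝ)
    (hmhat : ∀ n, mhat n = max (μhat n - α * (1 - β) / (⌊k⌋ : ℝ)) 0)
    (hhhat : ∀ n, hhat n = max (μhat n - α * β / (⌊k⌋ : ℝ)) 0)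
    (γhat : ℝ)
    (hγhat : γhat = ((α * β / (⌊k⌋ : ℝ)) * (⌊r⌋ : ℝ) - ∑ n, mhat n) /
      ((α / (⌊k⌋ : ℝ)) * ((⌈r⌉ : ℝ) - β) - (∑ n, mhat n) - ∑ n, hhat n))
    (μhat₁ μhat₂ : Fin N → ℝ)
    (hβmid : 0 < β → β < 1 →
      ((α / (⌊k⌋ : ℝ)) * ((⌈r⌉ : ℝ) - β) - (∑ n, mhat n) - (∑ n, hhat n) ≠ 0 ∧
        ∀ n, μhat₁ n = mhat n + (μhat n - mhat n - hhat n) * γhat ∧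
          μhat₂ n = μhat n - μhat₁ n))
    (hβend : (β = 0 ∨ β = 1) →
      ∀ n, μhat₁ n = μhat n * β ∧ μhat₂ n = μhat n * (1 - β))
    -- second-level split of μbarv according to δ
    (mbar hbar : Fin N → ℝ)
    (hmbar : ∀ n, mbar n = max (μbarv n - (1 - α) * (1 - δ) / (⌈k⌉ : ℝ)) 0)
    (hhbar : ∀ n, hbar n = max (μbarv n - (1 - α) * δ / (⌈k⌉ : ℝ)) 0)
    (γbar : ℝ)
    (hγbar : γbar = (((1 - α) * δ / (⌈k⌉ : ℝ)) * (⌊r⌋ : ℝ) - ∑ n, mbar n) /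
      (((1 - α) / (⌈k⌉ : ℝ)) * ((⌈r⌉ : ℝ) - δ) - (∑ n, mbar n) - ∑ n, hbar n))
    (μbar₁ μbar₂ : Fin N → ℝ)
    (hδmid : 0 < δ → δ < 1 →
      (((1 - α) / (⌈k⌉ : ℝ)) * ((⌈r⌉ : ℝ) - δ) - (∑ n, mbar n) - (∑ n, hbar n) ≠ 0 ∧
        ∀ n, μbar₁ n = mbar n + (μbarv n - mbar n - hbar n) * γbar ∧
          μbar₂ n = μbarv n - μbar₁ n))
    (hδend : (δ = 0 ∨ δ = 1) →
      ∀ n, μbar₁ n = μbarv n * δ ∧ μbar₂ n = μbarv n * (1 - δ)) :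
    (∀ n, μhat₁ n + μhat₂ n + μbar₁ n + μbar₂ n = μ n) ∧
    (∀ n, 0 ≤ μhat₁ n ∧ μhat₁ n ≤ α * β / (⌊k⌋ : ℝ)) ∧
    (∀ n, 0 ≤ μhat₂ n ∧ μhat₂ n ≤ α * (1 - β) / (⌊k⌋ : ℝ)) ∧
    (∀ n, 0 ≤ μbar₁ n ∧ μbar₁ n ≤ (1 - α) * δ / (⌈k⌉ : ℝ)) ∧
    (∀ n, 0 ≤ μbar₂ n ∧ μbar₂ n ≤ (1 - α) * (1 - δ) / (⌈k⌉ : ℝ)) ∧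
    (∑ n, μhat₁ n) = α * β * (⌊r⌋ : ℝ) / (⌊k⌋ : ℝ) ∧
    (∑ n, μhat₂ n) = α * (1 - β) * (⌈r⌉ : ℝ) / (⌊k⌋ : ℝ) ∧
    (∑ n, μbar₁ n) = (1 - α) * δ * (⌊r⌋ : ℝ) / (⌈k⌉ : ℝ) ∧
    (∑ n, μbar₂ n) = (1 - α) * (1 - δ) * (⌈r⌉ : ℝ) / (⌈k⌉ : ℝ) :=
  pruw_lemma2_storage_allocation_general N μ μbar hμ k p r hk hk1 hknotint hp hr hrnotint α β δ hαlb
    hαub hβ0 hβ1 hδ0 hδ1 hβlb hδlb hbalance m h hm hh γ hγ μhat μbarv hμhat hμbarv mhat hhat hmhat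
    hhhat γhat hγhat μhat₁ μhat₂ hβmid hβend mbar hbar hmbar hhbar γbar hγbar μbar₁ μbar₂ hδmid
    hδend
end

section
/- Let N ≥ R ≥ 1 be integers and let v : {1,…,N} → ℝ satisfy v(n) ≥ 0 for all n and Σ_{n=1}^N v(n) = R. Then there exists a function η from the R-element subsets of {1,…,N} to the nonnegative reals with Σ_S η(S) = 1 and, for every n, Σ_{S : n ∈ S} η(S) = v(n), if and only if v(n) ≤ 1 for all n. -/
open Finset

lemma pruw_sum_update1 {N : ℕ} (f : Fin N → ℝ) (a : Fin N) (b : ℝ) :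
    ∑ n, Function.update f a b n = ∑ n, f n - f a + b := by
  rw [Finset.sum_update_of_mem (Finset.mem_univ a)]
  have : ∑ x ∈ Finset.univ \ {a}, f x = ∑ n, f n - f a := by
    rw [Finset.sum_sdiff_eq_sub (Finset.singleton_subset_iff.mpr (Finset.mem_univ a)),
      Finset.sum_singleton]
  rw [this]; ring

lemma pruw_sum_update2 {N : ℕ} (v : Fin N → ℝ) {i j : Fin N} (hij : j ≠ i) (x y : ℝ) :
    ∑ n, Function.update (Function.update v i x) j y n
      = ∑ n, v n - v i - v j + x + y := by
  rw [pruw_sum_update1, pruw_sum_update1, Function.update_apply]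
  simp only [hij, if_false]
  ring

lemma pruw_exists_eta (N R : ℕ) :
    ∀ k : ℕ, ∀ v : Fin N → ℝ,
      ((Finset.univ : Finset (Fin N)).filter (fun n => v n ≠ 0 ∧ v n ≠ 1)).card ≤ k →
      (∀ n, 0 ≤ v n) → (∀ n, v n ≤ 1) → ∑ n, v n = (R : ℝ) →
      ∃ η : Finset (Fin N) → ℝ,
        (∀ S ∈ Finset.powersetCard R (Finset.univ : Finset (Fin N)), 0 ≤ η S) ∧
        (∑ S ∈ Finset.powersetCard R (Finset.univ : Finset (Fin N)), η S) = 1 ∧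
        ∀ n : Fin N,
          (∑ S ∈ (Finset.powersetCard R (Finset.univ : Finset (Fin N))).filter
            (fun S => n ∈ S), η S) = v n := by
  intro k
  induction k with
  | zero =>
    intro v hcard hv0 hv1 hsum
    have h01 : ∀ n, v n = 0 ∨ v n = 1 := by
      intro n
      by_contra h
      push_neg at h
      have hn : n ∈ (Finset.univ : Finset (Fin N)).filter (fun n => v n ≠ 0 ∧ v n ≠ 1) := by
        simp [h.1, h.2]
      have := Finset.card_pos.mpr ⟨n, hn⟩
      omega
    set S := (Finset.univ : Finset (Fin N)).filter (fun n => v n = 1) with hS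
    have hcardS : S.card = R := by
      have h1 : ∑ n, v n = (S.card : ℝ) := by
        rw [hS, ← Finset.sum_boole]
        refine Finset.sum_congr rfl fun n _ => ?_
        rcases h01 n with h | h <;> simp [h]
      rw [hsum] at h1
      exact_mod_cast h1.symm
    have hSmem : S ∈ Finset.powersetCard R (Finset.univ : Finset (Fin N)) :=
      Finset.mem_powersetCard.mpr ⟨Finset.subset_univ _, hcardS⟩
    refine ⟨fun T => if T = S then 1 else 0, ?_, ?_, ?_⟩
    · intro T _; positivity
    · rw [Finset.sum_ite_eq' _ S (fun _ => (1 : ℝ))]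
      simp [hSmem]
    · intro n
      rw [Finset.sum_ite_eq' _ S (fun _ => (1 : ℝ))]
      by_cases hn : n ∈ S
      · have : v n = 1 := (Finset.mem_filter.mp hn).2
        simp [hSmem, hn, this]
      · have : v n = 0 := by
          rcases h01 n with h | h
          · exact h
          · exact absurd (Finset.mem_filter.mpr ⟨Finset.mem_univ n, h⟩) hn
        simp [hSmem, hn, this]
  | succ k ih =>
    intro v hcard hv0 hv1 hsum
    by_cases hk : ((Finset.univ : Finset (Fin N)).filter (fun n => v n ≠ 0 ∧ v n ≠ 1)).card ≤ k
    · exact ih v hk hv0 hv1 hsum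
    push_neg at hk
    set F := (Finset.univ : Finset (Fin N)).filter (fun n => v n ≠ 0 ∧ v n ≠ 1) with hF
    have hFk : F.card = k + 1 := le_antisymm hcard hk
    have h2 : 1 < F.card := by
      by_contra h
      push_neg at h
      have h1 : F.card = 1 := by omega
      obtain ⟨i, hi⟩ := Finset.card_eq_one.mp h1
      have hiF : i ∈ F := by rw [hi]; simp
      have hfrac : v i ≠ 0 ∧ v i ≠ 1 := (Finset.mem_filter.mp hiF).2
      have hothers : ∀ n, n ≠ i → v n = 0 ∨ v n = 1 := by
        intro n hn
        by_contra hcon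
        push_neg at hcon
        have hnF : n ∈ F := Finset.mem_filter.mpr ⟨Finset.mem_univ n, hcon.1, hcon.2⟩
        rw [hi, Finset.mem_singleton] at hnF
        exact hn hnF
      have hvi0 : 0 < v i := lt_of_le_of_ne (hv0 i) (Ne.symm hfrac.1)
      have hvi1 : v i < 1 := lt_of_le_of_ne (hv1 i) hfrac.2
      have herase : ∑ n ∈ Finset.univ.erase i, v n
          = (((Finset.univ.erase i).filter (fun n => v n = 1)).card : ℝ) := by
        rw [← Finset.sum_boole]
        refine Finset.sum_congr rfl fun n hn => ?_
        rcases hothers n (Finset.mem_erase.mp hn).1 with h | h <;> simp [h]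
      have htot : v i + ∑ n ∈ Finset.univ.erase i, v n = (R : ℝ) := by
        rw [Finset.add_sum_erase _ _ (Finset.mem_univ i)]; exact hsum
      set c := ((Finset.univ.erase i).filter (fun n => v n = 1)).card with hc
      rw [herase] at htot
      have hclt : (c : ℝ) < (R : ℝ) := by linarith
      have hcgt : (R : ℝ) < (c : ℝ) + 1 := by linarith
      have h1' : c < R := by exact_mod_cast hclt
      have h2' : R < c + 1 := by exact_mod_cast hcgt
      omega
    obtain ⟨i, hi, j, hj, hij⟩ := Finset.one_lt_card.mp h2
    have hji : j ≠ i := fun h => hij h.symm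
    have hifrac := (Finset.mem_filter.mp hi).2
    have hjfrac := (Finset.mem_filter.mp hj).2
    have ha0 : 0 < v i := lt_of_le_of_ne (hv0 i) (Ne.symm hifrac.1)
    have ha1 : v i < 1 := lt_of_le_of_ne (hv1 i) hifrac.2
    have hb0 : 0 < v j := lt_of_le_of_ne (hv0 j) (Ne.symm hjfrac.1)
    have hb1 : v j < 1 := lt_of_le_of_ne (hv1 j) hjfrac.2
    set t1 := min (1 - v i) (v j) with ht1def
    set t2 := min (v i) (1 - v j) with ht2def
    have ht1 : 0 < t1 := lt_min (by linarith) hb0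
    have ht2 : 0 < t2 := lt_min ha0 (by linarith)
    have ht1a : t1 ≤ 1 - v i := min_le_left _ _
    have ht1b : t1 ≤ v j := min_le_right _ _
    have ht2a : t2 ≤ v i := min_le_left _ _
    have ht2b : t2 ≤ 1 - v j := min_le_right _ _
    set v1 := Function.update (Function.update v i (v i + t1)) j (v j - t1) with hv1def
    set v2 := Function.update (Function.update v i (v i - t2)) j (v j + t2) with hv2def
    have hv1i : v1 i = v i + t1 := by simp [hv1def, Function.update_apply, hji, hij]
    have hv1j : v1 j = v j - t1 := by simp [hv1def]
    have hv2i : v2 i = v i - t2 := by simp [hv2def, Function.update_apply, hji, hij]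
    have hv2j : v2 j = v j + t2 := by simp [hv2def]
    have hv1other : ∀ n, n ≠ i → n ≠ j → v1 n = v n := by
      intro n hni hnj; simp [hv1def, Function.update_apply, hni, hnj]
    have hv2other : ∀ n, n ≠ i → n ≠ j → v2 n = v n := by
      intro n hni hnj; simp [hv2def, Function.update_apply, hni, hnj]
    -- bounds
    have hv10 : ∀ n, 0 ≤ v1 n := by
      intro n
      by_cases hnj : n = j
      · subst hnj; rw [hv1j]; linarith
      by_cases hni : n = i
      · subst hni; rw [hv1i]; linarith
      · rw [hv1other n hni hnj]; exact hv0 n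
    have hv11 : ∀ n, v1 n ≤ 1 := by
      intro n
      by_cases hnj : n = j
      · subst hnj; rw [hv1j]; linarith
      by_cases hni : n = i
      · subst hni; rw [hv1i]; linarith
      · rw [hv1other n hni hnj]; exact hv1 n
    have hv20 : ∀ n, 0 ≤ v2 n := by
      intro n
      by_cases hnj : n = j
      · subst hnj; rw [hv2j]; linarith
      by_cases hni : n = i
      · subst hni; rw [hv2i]; linarith
      · rw [hv2other n hni hnj]; exact hv0 n
    have hv21 : ∀ n, v2 n ≤ 1 := by
      intro n
      by_cases hnj : n = j
      · subst hnj; rw [hv2j]; linarith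
      by_cases hni : n = i
      · subst hni; rw [hv2i]; linarith
      · rw [hv2other n hni hnj]; exact hv1 n
    have hsum1 : ∑ n, v1 n = (R : ℝ) := by
      rw [hv1def, pruw_sum_update2 v hji, hsum]; ring
    have hsum2 : ∑ n, v2 n = (R : ℝ) := by
      rw [hv2def, pruw_sum_update2 v hji, hsum]; ring
    -- fractional counts
    have hcount : ∀ (w : Fin N → ℝ) (m : Fin N), (m = i ∨ m = j) → (w m = 0 ∨ w m = 1) →
        (∀ n, n ≠ i → n ≠ j → w n = v n) →
        ((Finset.univ : Finset (Fin N)).filter (fun n => w n ≠ 0 ∧ w n ≠ 1)).card ≤ k := by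
      intro w m hm hwm hwother
      have hmF : m ∈ F := by rcases hm with rfl | rfl; exacts [hi, hj]
      have hsub : (Finset.univ : Finset (Fin N)).filter (fun n => w n ≠ 0 ∧ w n ≠ 1)
          ⊆ F.erase m := by
        intro n hn
        have hn' := (Finset.mem_filter.mp hn).2
        have hnm : n ≠ m := by
          rintro rfl
          rcases hwm with h | h
          · exact hn'.1 h
          · exact hn'.2 h
        refine Finset.mem_erase.mpr ⟨hnm, ?_⟩
        by_cases hni : n = i
        · exact hni ▸ hi
        by_cases hnj : n = j
        · exact hnj ▸ hj
        rw [hwother n hni hnj] at hn'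
        exact Finset.mem_filter.mpr ⟨Finset.mem_univ _, hn'⟩
      calc ((Finset.univ : Finset (Fin N)).filter (fun n => w n ≠ 0 ∧ w n ≠ 1)).card
          ≤ (F.erase m).card := Finset.card_le_card hsub
        _ = k := by rw [Finset.card_erase_of_mem hmF, hFk]; omega
    have hc1 : ((Finset.univ : Finset (Fin N)).filter (fun n => v1 n ≠ 0 ∧ v1 n ≠ 1)).card ≤ k := by
      rcases min_cases (1 - v i) (v j) with ⟨h, _⟩ | ⟨h, _⟩
      · exact hcount v1 i (Or.inl rfl) (Or.inr (by rw [hv1i, ht1def, h]; ring)) hv1other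
      · exact hcount v1 j (Or.inr rfl) (Or.inl (by rw [hv1j, ht1def, h]; ring)) hv1other
    have hc2 : ((Finset.univ : Finset (Fin N)).filter (fun n => v2 n ≠ 0 ∧ v2 n ≠ 1)).card ≤ k := by
      rcases min_cases (v i) (1 - v j) with ⟨h, _⟩ | ⟨h, _⟩
      · exact hcount v2 i (Or.inl rfl) (Or.inl (by rw [hv2i, ht2def, h]; ring)) hv2other
      · exact hcount v2 j (Or.inr rfl) (Or.inr (by rw [hv2j, ht2def, h]; ring)) hv2other
    obtain ⟨η1, hη1pos, hη1sum, hη1marg⟩ := ih v1 hc1 hv10 hv11 hsum1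
    obtain ⟨η2, hη2pos, hη2sum, hη2marg⟩ := ih v2 hc2 hv20 hv21 hsum2
    set lam := t2 / (t1 + t2) with hlam
    have htsum : 0 < t1 + t2 := by linarith
    have htne : t1 + t2 ≠ 0 := ne_of_gt htsum
    have hlam0 : 0 ≤ lam := div_nonneg ht2.le htsum.le
    have hlam1 : lam ≤ 1 := (div_le_one htsum).mpr (by linarith)
    refine ⟨fun S => lam * η1 S + (1 - lam) * η2 S, ?_, ?_, ?_⟩
    · intro S hS
      show (0:ℝ) ≤ lam * η1 S + (1 - lam) * η2 S
      have h1 := mul_nonneg hlam0 (hη1pos S hS)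
      have h2 := mul_nonneg (by linarith : (0:ℝ) ≤ 1 - lam) (hη2pos S hS)
      linarith
    · rw [Finset.sum_add_distrib, ← Finset.mul_sum, ← Finset.mul_sum, hη1sum, hη2sum]
      ring
    · intro n
      rw [Finset.sum_add_distrib, ← Finset.mul_sum, ← Finset.mul_sum, hη1marg, hη2marg]
      by_cases hnj : n = j
      · subst hnj
        rw [hv1j, hv2j, hlam]
        field_simp
        ring
      by_cases hni : n = i
      · subst hni
        rw [hv1i, hv2i, hlam]
        field_simp
        ring
      · rw [hv1other n hni hnj, hv2other n hni hnj]
        ring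

/-- Submodel-partitioning feasibility: a fractional assignment `η` of the
(coded) model to `R`-element subsets of the `N` databases that replicates
each piece at exactly `R` databases while exactly filling every database
(`Σ_{S ∋ n} η(S) = v(n)`) exists if and only if `v(n) ≤ 1` for all `n`. -/
theorem pruw_partitioning_feasibility
    (N R : ℕ) (hR : 1 ≤ R) (hRN : R ≤ N)
    (v : Fin N → ℝ) (hv : ∀ n, 0 ≤ v n) (hsum : ∑ n, v n = (R : ℝ)) :
    (∃ η : Finset (Fin N) → ℝ,
      (∀ S ∈ Finset.powersetCard R (Finset.univ : Finset (Fin N)), 0 ≤ η S) ∧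
      (∑ S ∈ Finset.powersetCard R (Finset.univ : Finset (Fin N)), η S) = 1 ∧
      ∀ n : Fin N,
        (∑ S ∈ (Finset.powersetCard R (Finset.univ : Finset (Fin N))).filter
          (fun S => n ∈ S), η S) = v n) ↔
    ∀ n, v n ≤ 1 := by
  constructor
  · rintro ⟨η, hpos, hone, hmarg⟩ n
    rw [← hmarg n, ← hone]
    exact Finset.sum_le_sum_of_subset_of_nonneg (Finset.filter_subset _ _)
      (fun S hS _ => hpos S hS)
  · intro hle
    exact pruw_exists_eta N R N v
      (le_trans (Finset.card_filter_le _ _) (by simp)) hv hle hsum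
end
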